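/- arXiv:1606.03132 — 4 statements merged into one kernel-verified Lean document; each statement's English description precedes it below -/
import Mathlib

section
/- There exist real numbers α, β and γ > 0 such that S(x,y) ≥ α + β‖x − y‖ + γ‖x − y‖² for every (x,y) ∈ ℝ^d × ℝ^d. -/
noncomputable section

/-- Configuration space `ℝ^d` with the Euclidean norm. -/
abbrev Ed (d : ℕ) := EuclideanSpace ℝ (Fin d)

/-- The point of `ℝ^d` with integer coordinates given by `r ∈ ℤ^d`. -/
def intVec (d : ℕ) (r : Fin d → ℤ) : Ed d := WithLp.toLp 2 (fun i => (r i : ℝ))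

/-- A generating function: a `C²` map `S : ℝ^d × ℝ^d → ℝ` which is `ℤ^d`-periodic for
the diagonal action and satisfies the uniform twist condition
`∑_{i,j} ∂²S/∂xᵢ∂yⱼ (x,y) ξᵢ ξⱼ ≤ -A‖ξ‖²` (expressed via the second derivative of `S`
applied to `((ξ,0),(0,ξ))`). -/
def IsGenFn {d : ℕ} (S : Ed d × Ed d → ℝ) : Prop :=
  ContDiff ℝ 2 S ∧
  (∀ (r : Fin d → ℤ) (x y : Ed d), S (x + intVec d r, y + intVec d r) = S (x, y)) ∧
  ∃ A : ℝ, 0 < A ∧ ∀ (x y ξ : Ed d),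
    iteratedFDeriv ℝ 2 S (x, y) ![(ξ, 0), (0, ξ)] ≤ -A * ‖ξ‖ ^ 2

/-- `∂₁S`, the partial differential of `S` with respect to its first variable. -/
def D1 {d : ℕ} (S : Ed d × Ed d → ℝ) (x y : Ed d) : Ed d →L[ℝ] ℝ :=
  fderiv ℝ (fun z => S (z, y)) x

/-- `∂₂S`, the partial differential of `S` with respect to its second variable. -/
def D2 {d : ℕ} (S : Ed d × Ed d → ℝ) (x y : Ed d) : Ed d →L[ℝ] ℝ :=
  fderiv ℝ (fun z => S (x, z)) y

/-- A bi-infinite sequence `(x_n)_{n∈ℤ}` is extremal if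
`∂₂S(x_{n-1}, x_n) + ∂₁S(x_n, x_{n+1}) = 0` for every `n`. -/
def IsExtremal {d : ℕ} (S : Ed d × Ed d → ℝ) (u : ℤ → Ed d) : Prop :=
  ∀ n : ℤ, D2 S (u (n - 1)) (u n) + D1 S (u n) (u (n + 1)) = 0

/-- The action `S(x_0, …, x_n)` of a finite sequence. -/
def act {d : ℕ} (S : Ed d × Ed d → ℝ) (n : ℕ) (γ : ℕ → Ed d) : ℝ :=
  ∑ k ∈ Finset.range n, S (γ k, γ (k + 1))

/-- The sequence `(x, z_1, …, z_{N-1}, y)` built from interior points `z`. -/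
def path {d : ℕ} (x y : Ed d) (N : ℕ) (z : Fin (N - 1) → Ed d) : ℕ → Ed d :=
  fun k => if h0 : k = 0 then x else if h : k < N then z ⟨k - 1, by omega⟩ else y

/-- The fixed-endpoint action `S_{x,y,N} : (x_1, …, x_{N-1}) ↦ S(x, x_1, …, x_{N-1}, y)`. -/
def fixedAct {d : ℕ} (S : Ed d × Ed d → ℝ) (x y : Ed d) (N : ℕ) :
    (Fin (N - 1) → Ed d) → ℝ :=
  fun z => act S N (path x y N z)

/-- `S` has no conjugate points: for all `x, y` and `N ≥ 2`, the fixed-endpoint action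
`S_{x,y,N}` has exactly one critical point, and attains its global minimum there. -/
def NoConjPts {d : ℕ} (S : Ed d × Ed d → ℝ) : Prop :=
  ∀ (x y : Ed d) (N : ℕ), 2 ≤ N →
    ∃ z : Fin (N - 1) → Ed d,
      fderiv ℝ (fixedAct S x y N) z = 0 ∧
      (∀ w, fixedAct S x y N z ≤ fixedAct S x y N w) ∧
      (∀ z', fderiv ℝ (fixedAct S x y N) z' = 0 → z' = z)

/-- `A_N(x,y)`: the minimum of the fixed-endpoint action `S_{x,y,N}` for `N ≥ 2`,
and `S(x,y)` for `N = 1`. -/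
def AN {d : ℕ} (S : Ed d × Ed d → ℝ) (N : ℕ) (x y : Ed d) : ℝ :=
  if N ≤ 1 then S (x, y) else sInf (Set.range (fixedAct S x y N))

/-- The minimizing holonomic value `Σ̃(S)`. -/
def holVal {d : ℕ} (S : Ed d × Ed d → ℝ) : ℝ :=
  sInf { v : ℝ | ∃ n : ℕ, 1 ≤ n ∧ ∃ γ : ℕ → Ed d,
    (∃ r : Fin d → ℤ, γ n - γ 0 = intVec d r) ∧ v = act S n γ / n }

/-- The normalized action `S̃(x_0, …, x_n) = S(x_0, …, x_n) - n Σ̃(S)`. -/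
def actTilde {d : ℕ} (S : Ed d × Ed d → ℝ) (n : ℕ) (γ : ℕ → Ed d) : ℝ :=
  act S n γ - n * holVal S

/-- The Mañé potential `π(x,y)`. -/
def manePot {d : ℕ} (S : Ed d × Ed d → ℝ) (x y : Ed d) : ℝ :=
  sInf { v : ℝ | ∃ n : ℕ, 1 ≤ n ∧ ∃ γ : ℕ → Ed d,
    γ 0 = x ∧ (∃ r : Fin d → ℤ, γ n - y = intVec d r) ∧ v = actTilde S n γ }

/-- The Aubry set `Ā(S) ⊂ ℝ^d × ℝ^d`. -/
def aubry {d : ℕ} (S : Ed d × Ed d → ℝ) : Set (Ed d × Ed d) :=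
  { p | ∀ ε > 0, ∃ n : ℕ, 1 ≤ n ∧ ∃ γ : ℕ → Ed d,
      (∃ r : Fin d → ℤ, γ n - γ 0 = intVec d r) ∧
      ‖p.1 - γ 0‖ < ε ∧ ‖p.2 - γ 1‖ < ε ∧ actTilde S n γ < ε }

/-- The generating function `S_c(x,y) = S(x,y) + c(x - y)` associated to a cohomology
class `c ∈ (ℝ^d)*`. -/
def Sc {d : ℕ} (S : Ed d × Ed d → ℝ) (c : Ed d →L[ℝ] ℝ) : Ed d × Ed d → ℝ :=
  fun p => S p + c (p.1 - p.2)


/-! Write `ξ = y - x`. Along the segment `s ↦ (x + sξ, x + tξ)` the twist condition makes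
`∂₂S(x, x + tξ) ξ` exceed its value `∂₂S(x + tξ, x + tξ) ξ` on the diagonal by at least
`A t ‖ξ‖²`. By periodicity `S` and `‖dS‖` take on the diagonal only the values they take on a
compact set, so `S(x, x) ≥ m` and `|∂₂S(u, u) ξ| ≤ C ‖ξ‖`; integrating `t ↦ ∂₂S(x, x + tξ) ξ`
over `[0, 1]` gives `S(x, y) ≥ m - C ‖ξ‖ + (A/2) ‖ξ‖²`. -/

theorem sub_le_sub_of_hasDerivAt_le {f g f' g' : ℝ → ℝ} {a b : ℝ} (hab : a ≤ b)
    (hf : ∀ t, HasDerivAt f (f' t) t) (hg : ∀ t, HasDerivAt g (g' t) t)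
    (hle : ∀ t ∈ Set.Icc a b, f' t ≤ g' t) :
    f b - f a ≤ g b - g a := by
  have hmono : MonotoneOn (g - f) (Set.Icc a b) :=
    monotoneOn_of_hasDerivWithinAt_nonneg (convex_Icc a b)
      (fun t _ => ((hg t).sub (hf t)).continuousAt.continuousWithinAt)
      (fun t _ => ((hg t).sub (hf t)).hasDerivWithinAt)
      (fun t ht => sub_nonneg.2 (hle t (interior_subset ht)))
  have := hmono (Set.left_mem_Icc.2 hab) (Set.right_mem_Icc.2 hab) hab
  simp only [Pi.sub_apply] at this
  linarith

section Twist

variable {E : Type*} [NormedAddCommGroup E] [NormedSpace ℝ E] {S : E × E → ℝ} {A : ℝ}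

theorem le_fderiv_apply_inr_of_twist (hS : ContDiff ℝ 2 S)
    (htwist : ∀ p ξ, fderiv ℝ (fderiv ℝ S) p (ξ, 0) (0, ξ) ≤ -A * ‖ξ‖ ^ 2)
    (x ξ : E) {t : ℝ} (ht : 0 ≤ t) :
    fderiv ℝ S (x + t • ξ, x + t • ξ) (0, ξ) + A * ‖ξ‖ ^ 2 * t ≤
      fderiv ℝ S (x, x + t • ξ) (0, ξ) := by
  have hS' : Differentiable ℝ (fderiv ℝ S) :=
    (hS.fderiv_right le_rfl).differentiable one_ne_zero
  have hline (s : ℝ) : HasDerivAt (fun s : ℝ => (x + s • ξ, x + t • ξ)) (ξ, 0) s :=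
    (((hasDerivAt_id s).smul_const ξ).const_add x |>.congr_deriv (one_smul ℝ ξ)).prodMk
      (hasDerivAt_const s _)
  have hderiv (s : ℝ) : HasDerivAt (fun s => fderiv ℝ S (x + s • ξ, x + t • ξ) (0, ξ))
      (fderiv ℝ (fderiv ℝ S) (x + s • ξ, x + t • ξ) (ξ, 0) (0, ξ)) s := by
    simpa using ((hS' _).hasFDerivAt.comp_hasDerivAt s (hline s)).clm_apply
      (hasDerivAt_const s ((0 : E), ξ))
  have := sub_le_sub_of_hasDerivAt_le ht hderiv
    (fun s => hasDerivAt_mul_const (-A * ‖ξ‖ ^ 2)) (fun s _ => htwist _ ξ)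
  simp only [zero_smul, add_zero, zero_mul, sub_zero] at this
  linarith

theorem apply_diag_sub_add_sq_le_of_twist (hS : ContDiff ℝ 2 S)
    (htwist : ∀ p ξ, fderiv ℝ (fderiv ℝ S) p (ξ, 0) (0, ξ) ≤ -A * ‖ξ‖ ^ 2)
    {C : ℝ} (hdiag : ∀ u, ‖fderiv ℝ S (u, u)‖ ≤ C) (x y : E) :
    S (x, x) - C * ‖y - x‖ + A / 2 * ‖y - x‖ ^ 2 ≤ S (x, y) := by
  set ξ := y - x
  have hline (t : ℝ) : HasDerivAt (fun t : ℝ => (x, x + t • ξ)) (0, ξ) t :=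
    (hasDerivAt_const t x).prodMk
      (((hasDerivAt_id t).smul_const ξ).const_add x |>.congr_deriv (one_smul ℝ ξ))
  have hderiv (t : ℝ) :
      HasDerivAt (fun t => S (x, x + t • ξ)) (fderiv ℝ S (x, x + t • ξ) (0, ξ)) t :=
    ((hS.differentiable two_ne_zero) _).hasFDerivAt.comp_hasDerivAt t (hline t)
  have hpoly (t : ℝ) : HasDerivAt (fun t => -C * ‖ξ‖ * t + A * ‖ξ‖ ^ 2 / 2 * t ^ 2)
      (-C * ‖ξ‖ + A * ‖ξ‖ ^ 2 * t) t := by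
    refine (((hasDerivAt_id' t).const_mul (-C * ‖ξ‖)).fun_add
      ((hasDerivAt_pow 2 t).const_mul (A * ‖ξ‖ ^ 2 / 2))).congr_deriv ?_
    push_cast
    ring
  have hslope (t : ℝ) (ht : t ∈ Set.Icc (0 : ℝ) 1) :
      -C * ‖ξ‖ + A * ‖ξ‖ ^ 2 * t ≤ fderiv ℝ S (x, x + t • ξ) (0, ξ) := by
    have hdiag_bound : |fderiv ℝ S (x + t • ξ, x + t • ξ) (0, ξ)| ≤ C * ‖ξ‖ := by
      calc _ ≤ ‖fderiv ℝ S (x + t • ξ, x + t • ξ)‖ * ‖((0 : E), ξ)‖ :=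
            (fderiv ℝ S _).le_opNorm _
        _ ≤ C * ‖ξ‖ := by
            rw [Prod.norm_mk, norm_zero, max_eq_right (norm_nonneg ξ)]
            gcongr
            exact hdiag _
    linarith [neg_abs_le (fderiv ℝ S (x + t • ξ, x + t • ξ) (0, ξ)),
      le_fderiv_apply_inr_of_twist hS htwist x ξ ht.1]
  have := sub_le_sub_of_hasDerivAt_le zero_le_one hpoly hderiv hslope
  simp only [one_smul, zero_smul, add_zero, ξ, add_sub_cancel] at this
  linarith

end Twist

theorem exists_norm_sub_intVec_le (d : ℕ) (u : Ed d) :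
    ∃ r : Fin d → ℤ, ‖u - intVec d r‖ ≤ Real.sqrt d := by
  refine ⟨fun i => ⌊u i⌋, ?_⟩
  rw [EuclideanSpace.norm_eq]
  gcongr
  calc ∑ i, ‖(u - intVec d fun i => ⌊u i⌋) i‖ ^ 2 ≤ ∑ _i : Fin d, (1 : ℝ) := by
        gcongr with i
        have hfract : (u - intVec d fun i => ⌊u i⌋) i = Int.fract (u i) := rfl
        rw [hfract, Real.norm_of_nonneg (Int.fract_nonneg _)]
        exact pow_le_one₀ (Int.fract_nonneg _) (Int.fract_lt_one _).le
    _ = d := by simp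

theorem isCompact_range_diag_of_periodic {d : ℕ} {X : Type*} [TopologicalSpace X]
    {F : Ed d × Ed d → X} (hF : Continuous F)
    (hper : ∀ (r : Fin d → ℤ) (x y : Ed d), F (x + intVec d r, y + intVec d r) = F (x, y)) :
    IsCompact (Set.range fun u : Ed d => F (u, u)) := by
  have hrange : Set.range (fun u : Ed d => F (u, u)) =
      (fun u : Ed d => F (u, u)) '' Metric.closedBall 0 (Real.sqrt d) := by
    refine Set.Subset.antisymm ?_ (Set.image_subset_range _ _)
    rintro _ ⟨u, rfl⟩
    obtain ⟨r, hr⟩ := exists_norm_sub_intVec_le d u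
    refine ⟨u - intVec d r, by simpa using hr, ?_⟩
    simpa using (hper r (u - intVec d r) (u - intVec d r)).symm
  rw [hrange]
  exact (isCompact_closedBall _ _).image (by fun_prop)

theorem fderiv_add_intVec {d : ℕ} {S : Ed d × Ed d → ℝ}
    (hper : ∀ (r : Fin d → ℤ) (x y : Ed d), S (x + intVec d r, y + intVec d r) = S (x, y))
    (r : Fin d → ℤ) (x y : Ed d) :
    fderiv ℝ S (x + intVec d r, y + intVec d r) = fderiv ℝ S (x, y) := by
  have hshift : (fun q : Ed d × Ed d => S (q + (intVec d r, intVec d r))) = S :=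
    funext fun q => hper r q.1 q.2
  rw [← Prod.mk_add_mk, ← fderiv_comp_add_right, hshift]

theorem stmt_0_general (d : ℕ) (S : Ed d × Ed d → ℝ) (hS : IsGenFn S) :
    ∃ α β γ : ℝ, 0 < γ ∧
      ∀ x y : Ed d, α + β * ‖x - y‖ + γ * ‖x - y‖ ^ 2 ≤ S (x, y) := by
  obtain ⟨hC2, hper, A, hA, htwist⟩ := hS
  obtain ⟨m, hm⟩ := (isCompact_range_diag_of_periodic hC2.continuous hper).bddBelow
  obtain ⟨C, hC⟩ := (isCompact_range_diag_of_periodic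
    (hC2.continuous_fderiv two_ne_zero).norm
    fun r x y => by rw [fderiv_add_intVec hper]).bddAbove
  have hmixed (p : Ed d × Ed d) (ξ : Ed d) :
      fderiv ℝ (fderiv ℝ S) p (ξ, 0) (0, ξ) ≤ -A * ‖ξ‖ ^ 2 := by
    simpa [iteratedFDeriv_two_apply] using htwist p.1 p.2 ξ
  refine ⟨m, -C, A / 2, half_pos hA, fun x y => ?_⟩
  have hdiag := hm ⟨x, rfl⟩
  have hbound := apply_diag_sub_add_sq_le_of_twist hC2 hmixed (fun u => hC ⟨u, rfl⟩) x y
  rw [norm_sub_rev]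
  linarith

/-- There exist real numbers `α`, `β` and `γ > 0` such that
`S(x,y) ≥ α + β‖x - y‖ + γ‖x - y‖²` for every `(x,y) ∈ ℝ^d × ℝ^d`. -/
theorem stmt_0 (d : ℕ) (hd : 1 ≤ d) (S : Ed d × Ed d → ℝ) (hS : IsGenFn S) :
    ∃ α β γ : ℝ, 0 < γ ∧
      ∀ x y : Ed d, α + β * ‖x - y‖ + γ * ‖x - y‖ ^ 2 ≤ S (x, y) :=
  stmt_0_general d S hS

end
end

section
/- For every x, y ∈ ℝ^d and every integer N ≥ 1, there exists an extremal sequence (x_n)_{n∈ℤ} such that x_0 = x and x_N = y. -/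
noncomputable section

theorem mono_helper {f f' : ℝ → ℝ} (hd : ∀ t, HasDerivAt f (f' t) t)
    (h0 : ∀ t ∈ Set.Icc (0:ℝ) 1, 0 ≤ f' t) : f 0 ≤ f 1 := by
  have hmono : MonotoneOn f (Set.Icc (0:ℝ) 1) := by
    apply monotoneOn_of_deriv_nonneg (convex_Icc 0 1)
    · exact Continuous.continuousOn (continuous_iff_continuousAt.2 fun t => (hd t).continuousAt)
    · intro t _
      exact (hd t).differentiableAt.differentiableWithinAt
    · intro t ht
      rw [(hd t).deriv]
      exact h0 t (Set.mem_of_mem_of_subset ht (by rw [interior_Icc]; exact Set.Ioo_subset_Icc_self))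
  exact hmono (by norm_num) (by norm_num) (by norm_num)

theorem le_helper {f f' : ℝ → ℝ} (hd : ∀ t, HasDerivAt f (f' t) t) {c : ℝ}
    (hc : ∀ t ∈ Set.Icc (0:ℝ) 1, f' t ≤ c) : f 1 ≤ f 0 + c := by
  have hd' : ∀ t, HasDerivAt (fun t => c * t - f t) (c - f' t) t := by
    intro t
    exact (((hasDerivAt_id t).const_mul c).sub (hd t)).congr_deriv (by ring)
  have := mono_helper hd' (fun t ht => by simpa using hc t ht)
  simp at this; linarith
namespace Stmt1

variable {d : ℕ} {S : Ed d × Ed d → ℝ}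

theorem hasFDerivAt_S (hC : ContDiff ℝ 2 S) (p : Ed d × Ed d) :
    HasFDerivAt S (fderiv ℝ S p) p :=
  ((hC.differentiable (by norm_num)) p).hasFDerivAt

theorem hasFDerivAt_D1 (hC : ContDiff ℝ 2 S) (x y : Ed d) :
    HasFDerivAt (fun z => S (z, y)) ((fderiv ℝ S (x, y)).comp (ContinuousLinearMap.inl ℝ (Ed d) (Ed d))) x :=
  (hasFDerivAt_S hC (x, y)).comp x (hasFDerivAt_prodMk_left x y)

theorem hasFDerivAt_D2 (hC : ContDiff ℝ 2 S) (x y : Ed d) :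
    HasFDerivAt (fun z => S (x, z)) ((fderiv ℝ S (x, y)).comp (ContinuousLinearMap.inr ℝ (Ed d) (Ed d))) y :=
  (hasFDerivAt_S hC (x, y)).comp y (hasFDerivAt_prodMk_right x y)

theorem D1_apply (hC : ContDiff ℝ 2 S) (x y ξ : Ed d) :
    D1 S x y ξ = fderiv ℝ S (x, y) (ξ, 0) := by
  rw [D1, (hasFDerivAt_D1 hC x y).fderiv]; rfl

theorem D2_apply (hC : ContDiff ℝ 2 S) (x y ξ : Ed d) :
    D2 S x y ξ = fderiv ℝ S (x, y) (0, ξ) := by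
  rw [D2, (hasFDerivAt_D2 hC x y).fderiv]; rfl

theorem hasFDerivAt_D1' (hC : ContDiff ℝ 2 S) (x y : Ed d) :
    HasFDerivAt (fun z => S (z, y)) (D1 S x y) x := by
  rw [D1, (hasFDerivAt_D1 hC x y).fderiv]; exact hasFDerivAt_D1 hC x y

theorem hasFDerivAt_D2' (hC : ContDiff ℝ 2 S) (x y : Ed d) :
    HasFDerivAt (fun z => S (x, z)) (D2 S x y) y := by
  rw [D2, (hasFDerivAt_D2 hC x y).fderiv]; exact hasFDerivAt_D2 hC x y

theorem contDiff_F (hC : ContDiff ℝ 2 S) : ContDiff ℝ 1 (fderiv ℝ S) :=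
  hC.fderiv_right (by norm_num)

theorem hasFDerivAt_F (hC : ContDiff ℝ 2 S) (p : Ed d × Ed d) :
    HasFDerivAt (fderiv ℝ S) (fderiv ℝ (fderiv ℝ S) p) p :=
  (((contDiff_F hC).differentiable (by norm_num)) p).hasFDerivAt

theorem F2_symm (hC : ContDiff ℝ 2 S) (p : Ed d × Ed d) (u v : Ed d × Ed d) :
    fderiv ℝ (fderiv ℝ S) p u v = fderiv ℝ (fderiv ℝ S) p v u :=
  second_derivative_symmetric (fun q => hasFDerivAt_S hC q) (hasFDerivAt_F hC p) u v

theorem twist1 (hC : ContDiff ℝ 2 S) {A : ℝ}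
    (htw : ∀ (x y ξ : Ed d), iteratedFDeriv ℝ 2 S (x, y) ![(ξ, 0), (0, ξ)] ≤ -A * ‖ξ‖ ^ 2)
    (x y ξ : Ed d) : fderiv ℝ (fderiv ℝ S) (x, y) (ξ, 0) (0, ξ) ≤ -A * ‖ξ‖ ^ 2 := by
  have := htw x y ξ
  rwa [iteratedFDeriv_two_apply] at this

theorem twist2 (hC : ContDiff ℝ 2 S) {A : ℝ}
    (htw : ∀ (x y ξ : Ed d), iteratedFDeriv ℝ 2 S (x, y) ![(ξ, 0), (0, ξ)] ≤ -A * ‖ξ‖ ^ 2)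
    (x y ξ : Ed d) : fderiv ℝ (fderiv ℝ S) (x, y) (0, ξ) (ξ, 0) ≤ -A * ‖ξ‖ ^ 2 := by
  rw [F2_symm hC]; exact twist1 hC htw x y ξ

theorem hasDerivAt_F_line (hC : ContDiff ℝ 2 S) (base w vec : Ed d × Ed d) (t : ℝ) :
    HasDerivAt (fun t : ℝ => fderiv ℝ S (base + t • w) vec)
      (fderiv ℝ (fderiv ℝ S) (base + t • w) w vec) t := by
  have hline : HasDerivAt (fun t : ℝ => base + t • w) w t := by
    simpa using ((hasDerivAt_id t).smul_const w).const_add base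
  have h1 : HasDerivAt (fun t : ℝ => fderiv ℝ S (base + t • w))
      (fderiv ℝ (fderiv ℝ S) (base + t • w) w) t :=
    (hasFDerivAt_F hC _).comp_hasDerivAt t hline
  exact h1.clm_apply (hasDerivAt_const t vec)  |>.congr_deriv (by simp)

/-- moving the first argument by `ξ` decreases `∂₂S(·,y)ξ` by at least `A‖ξ‖²`. -/
theorem step_x (hC : ContDiff ℝ 2 S) {A : ℝ}
    (htw : ∀ (x y ξ : Ed d), iteratedFDeriv ℝ 2 S (x, y) ![(ξ, 0), (0, ξ)] ≤ -A * ‖ξ‖ ^ 2)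
    (x y ξ : Ed d) :
    fderiv ℝ S (x + ξ, y) (0, ξ) ≤ fderiv ℝ S (x, y) (0, ξ) + -A * ‖ξ‖ ^ 2 := by
  have h := le_helper (f := fun t : ℝ => fderiv ℝ S ((x, y) + t • ((ξ, 0) : Ed d × Ed d)) (0, ξ))
    (f' := fun t : ℝ => fderiv ℝ (fderiv ℝ S) ((x, y) + t • ((ξ, 0) : Ed d × Ed d)) (ξ, 0) (0, ξ))
    (fun t => hasDerivAt_F_line hC _ _ _ t) (c := -A * ‖ξ‖ ^ 2) ?_
  · simpa using h
  · intro t _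
    have : ((x, y) + t • ((ξ, 0) : Ed d × Ed d)) = (x + t • ξ, y) := by simp
    show (fderiv ℝ (fderiv ℝ S) ((x, y) + t • _)) _ _ ≤ _
    rw [this]
    exact twist1 hC htw _ _ ξ

/-- moving the second argument by `w` decreases `∂₁S(x,·)w` by at least `A‖w‖²`. -/
theorem step_y (hC : ContDiff ℝ 2 S) {A : ℝ}
    (htw : ∀ (x y ξ : Ed d), iteratedFDeriv ℝ 2 S (x, y) ![(ξ, 0), (0, ξ)] ≤ -A * ‖ξ‖ ^ 2)
    (x y w : Ed d) :
    fderiv ℝ S (x, y + w) (w, 0) ≤ fderiv ℝ S (x, y) (w, 0) + -A * ‖w‖ ^ 2 := by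
  have h := le_helper (f := fun t : ℝ => fderiv ℝ S ((x, y) + t • ((0, w) : Ed d × Ed d)) (w, 0))
    (f' := fun t : ℝ => fderiv ℝ (fderiv ℝ S) ((x, y) + t • ((0, w) : Ed d × Ed d)) (0, w) (w, 0))
    (fun t => hasDerivAt_F_line hC _ _ _ t) (c := -A * ‖w‖ ^ 2) ?_
  · simpa using h
  · intro t _
    have : ((x, y) + t • ((0, w) : Ed d × Ed d)) = (x, y + t • w) := by simp
    show (fderiv ℝ (fderiv ℝ S) ((x, y) + t • _)) _ _ ≤ _
    rw [this]
    exact twist2 hC htw _ _ w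

theorem F_per (hC : ContDiff ℝ 2 S)
    (hper : ∀ (r : Fin d → ℤ) (x y : Ed d), S (x + intVec d r, y + intVec d r) = S (x, y))
    (r : Fin d → ℤ) (p : Ed d × Ed d) :
    fderiv ℝ S (p + (intVec d r, intVec d r)) = fderiv ℝ S p := by
  set c : Ed d × Ed d := (intVec d r, intVec d r) with hc
  have heq : (fun q : Ed d × Ed d => S (q + c)) = S := by
    funext q
    exact hper r q.1 q.2
  have h1 : HasFDerivAt (fun q : Ed d × Ed d => S (q + c)) (fderiv ℝ S (p + c)) p := by
    have := (hasFDerivAt_S hC (p + c)).comp p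
      (((hasFDerivAt_id p).add_const c) : HasFDerivAt (fun q : Ed d × Ed d => q + c) _ p)
    simpa [Function.comp_def] using this
  rw [heq] at h1
  exact h1.fderiv.symm

theorem reduce (z : Ed d) :
    ∃ (z' : Ed d) (r : Fin d → ℤ), z = z' + intVec d r ∧ ‖z'‖ ≤ Real.sqrt d := by
  refine ⟨WithLp.toLp 2 (fun i => Int.fract (z i)), fun i => ⌊z i⌋, ?_, ?_⟩
  · ext i
    show z i = Int.fract (z i) + ((⌊z i⌋ : ℝ))
    rw [add_comm]
    exact (Int.floor_add_fract (z i)).symm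
  · rw [EuclideanSpace.norm_eq]
    apply Real.sqrt_le_sqrt
    calc ∑ i, ‖Int.fract (z i)‖ ^ 2 ≤ ∑ _i : Fin d, 1 := by
          apply Finset.sum_le_sum
          intro i _
          have h1 : 0 ≤ Int.fract (z i) := Int.fract_nonneg _
          have h2 : Int.fract (z i) < 1 := Int.fract_lt_one _
          rw [Real.norm_eq_abs, abs_of_nonneg h1]
          nlinarith
      _ = (d : ℝ) := by simp

theorem exists_bounds (hC : ContDiff ℝ 2 S)
    (hper : ∀ (r : Fin d → ℤ) (x y : Ed d), S (x + intVec d r, y + intVec d r) = S (x, y)) :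
    ∃ M₀ M₁ : ℝ, 0 ≤ M₀ ∧ 0 ≤ M₁ ∧
      (∀ z : Ed d, ‖fderiv ℝ S (z, z)‖ ≤ M₀) ∧ (∀ z : Ed d, -M₁ ≤ S (z, z)) := by
  set K := Metric.closedBall (0 : Ed d) (Real.sqrt d)
  have hK : IsCompact K := isCompact_closedBall _ _
  have hne : K.Nonempty := ⟨0, by simp [K, Real.sqrt_nonneg]⟩
  have hcont0 : Continuous fun z : Ed d => ‖fderiv ℝ S (z, z)‖ :=
    ((contDiff_F hC).continuous.comp (continuous_id.prodMk continuous_id)).norm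
  have hcont1 : Continuous fun z : Ed d => S (z, z) :=
    hC.continuous.comp (continuous_id.prodMk continuous_id)
  obtain ⟨z₀, _, hz₀⟩ := hK.exists_isMaxOn hne hcont0.continuousOn
  obtain ⟨z₁, _, hz₁⟩ := hK.exists_isMinOn hne hcont1.continuousOn
  refine ⟨max ‖fderiv ℝ S (z₀, z₀)‖ 0, max (-(S (z₁, z₁))) 0, le_max_right _ _, le_max_right _ _,
    ?_, ?_⟩
  · intro z
    obtain ⟨z', r, hzr, hz'⟩ := reduce z
    have : fderiv ℝ S (z, z) = fderiv ℝ S (z', z') := by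
      have := F_per hC hper r (z', z')
      rw [← this]
      congr 1
      rw [hzr]; rfl
    rw [this]
    exact le_trans (hz₀ (a := z') (by simpa [K, Metric.mem_closedBall, dist_eq_norm] using hz'))
      (le_max_left _ _)
  · intro z
    obtain ⟨z', r, hzr, hz'⟩ := reduce z
    have : S (z, z) = S (z', z') := by
      rw [hzr]
      exact hper r z' z'
    rw [this]
    have h1 : S (z₁, z₁) ≤ S (z', z') :=
      hz₁ (a := z') (by simpa [K, Metric.mem_closedBall, dist_eq_norm] using hz')
    have h2 : -max (-(S (z₁, z₁))) 0 ≤ S (z₁, z₁) := by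
      have := le_max_left (-(S (z₁, z₁))) 0
      linarith
    linarith

theorem hasDerivAt_S_line (hC : ContDiff ℝ 2 S) (base w : Ed d × Ed d) (t : ℝ) :
    HasDerivAt (fun t : ℝ => S (base + t • w)) (fderiv ℝ S (base + t • w) w) t := by
  have hline : HasDerivAt (fun t : ℝ => base + t • w) w t := by
    simpa using ((hasDerivAt_id t).smul_const w).const_add base
  simpa [Function.comp_def] using (hasFDerivAt_S hC _).comp_hasDerivAt t hline

theorem superlinear (hC : ContDiff ℝ 2 S) {A : ℝ} (hA : 0 < A)
    (htw : ∀ (x y ξ : Ed d), iteratedFDeriv ℝ 2 S (x, y) ![(ξ, 0), (0, ξ)] ≤ -A * ‖ξ‖ ^ 2)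
    {M₀ M₁ : ℝ} (hM₀ : ∀ z : Ed d, ‖fderiv ℝ S (z, z)‖ ≤ M₀) (hM₁ : ∀ z : Ed d, -M₁ ≤ S (z, z))
    (x v : Ed d) :
    A / 2 * ‖v‖ ^ 2 - M₀ * ‖v‖ - M₁ ≤ S (x, x + v) := by
  -- bound on the diagonal derivative
  have hdiag : ∀ z : Ed d, -(M₀ * ‖v‖) ≤ fderiv ℝ S (z, z) (0, v) := by
    intro z
    have h1 : ‖fderiv ℝ S (z, z) (0, v)‖ ≤ M₀ * ‖v‖ := by
      calc ‖fderiv ℝ S (z, z) (0, v)‖ ≤ ‖fderiv ℝ S (z, z)‖ * ‖((0 : Ed d), v)‖ :=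
            (fderiv ℝ S (z, z)).le_opNorm _
        _ ≤ M₀ * ‖v‖ := by
            have : ‖((0 : Ed d), v)‖ = ‖v‖ := by simp [Prod.norm_def]
            rw [this]
            exact mul_le_mul_of_nonneg_right (hM₀ z) (norm_nonneg v)
    have := neg_abs_le (fderiv ℝ S (z, z) (0, v))
    rw [Real.norm_eq_abs] at h1
    linarith [neg_le_neg h1]
  -- the derivative lower bound along the segment
  have hkey : ∀ t ∈ Set.Icc (0:ℝ) 1,
      A * ‖v‖ ^ 2 * t - M₀ * ‖v‖ ≤ fderiv ℝ S (x, x + t • v) (0, v) := by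
    intro t ht
    rcases eq_or_lt_of_le ht.1 with h0 | h0
    · rw [← h0]
      simpa using hdiag x
    · -- use step_x with ξ = t • v
      have hs := step_x hC htw x (x + t • v) (t • v)
      have hl1 : fderiv ℝ S (x + t • v, x + t • v) (0, t • v)
          = t * fderiv ℝ S (x + t • v, x + t • v) (0, v) := by
        have : ((0 : Ed d), t • v) = t • ((0 : Ed d), v) := by simp
        rw [this, map_smul]; rfl
      have hl2 : fderiv ℝ S (x, x + t • v) (0, t • v)
          = t * fderiv ℝ S (x, x + t • v) (0, v) := by
        have : ((0 : Ed d), t • v) = t • ((0 : Ed d), v) := by simp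
        rw [this, map_smul]; rfl
      rw [hl1, hl2] at hs
      have hnt : ‖t • v‖ ^ 2 = t ^ 2 * ‖v‖ ^ 2 := by
        rw [norm_smul, Real.norm_eq_abs, abs_of_pos h0]; ring
      rw [hnt] at hs
      have hd := hdiag (x + t • v)
      -- hs : t * D(diag) ≤ t * D(x, x+tv) + -A * (t^2 * ‖v‖^2)
      have h3 : t * (A * ‖v‖ ^ 2 * t - M₀ * ‖v‖) ≤ t * fderiv ℝ S (x, x + t • v) (0, v) := by
        nlinarith
      exact le_of_mul_le_mul_left (by linarith [h3]) h0
  -- monotone comparison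
  have hmono := mono_helper
    (f := fun t : ℝ => S ((x, x) + t • ((0 : Ed d), v))
      - A * ‖v‖ ^ 2 * t ^ 2 / 2 + M₀ * ‖v‖ * t)
    (f' := fun t : ℝ => fderiv ℝ S ((x, x) + t • ((0 : Ed d), v)) (0, v)
      - A * ‖v‖ ^ 2 * t + M₀ * ‖v‖) ?_ ?_
  · have e0 : ((x, x) + (0:ℝ) • ((0 : Ed d), v)) = ((x, x) : Ed d × Ed d) := by simp
    have e1 : ((x, x) + (1:ℝ) • ((0 : Ed d), v)) = ((x, x + v) : Ed d × Ed d) := by simp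
    simp only [e0, e1, zero_pow, mul_zero, one_pow, mul_one, ne_eq, OfNat.ofNat_ne_zero,
      not_false_eq_true, sub_zero, add_zero] at hmono
    have := hM₁ x
    linarith
  · intro t
    have h1 := hasDerivAt_S_line hC (x, x) ((0 : Ed d), v) t
    have h2 : HasDerivAt (fun t : ℝ => A * ‖v‖ ^ 2 * t ^ 2 / 2) (A * ‖v‖ ^ 2 * t) t := by
      have := ((hasDerivAt_pow 2 t).const_mul (A * ‖v‖ ^ 2 / 2))
      have e : (fun t : ℝ => A * ‖v‖ ^ 2 * t ^ 2 / 2) = fun y => A * ‖v‖ ^ 2 / 2 * y ^ 2 := by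
        funext s; ring
      rw [e]
      exact this.congr_deriv (by simp only [Nat.cast_ofNat, Nat.reduceSub, pow_one]; ring)
    have h3 : HasDerivAt (fun t : ℝ => M₀ * ‖v‖ * t) (M₀ * ‖v‖) t := by
      simpa using (hasDerivAt_id t).const_mul (M₀ * ‖v‖)
    have hv : fderiv ℝ S ((x, x) + t • ((0 : Ed d), v)) ((0 : Ed d), v)
        = fderiv ℝ S (x, x + t • v) (0, v) := by
      congr 1 <;> simp
    exact ((h1.sub h2).add h3).congr_deriv (by simp)
  · intro t ht
    have e : ((x, x) + t • ((0 : Ed d), v)) = ((x, x + t • v) : Ed d × Ed d) := by simp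
    show 0 ≤ fderiv ℝ S ((x, x) + t • ((0:Ed d), v)) (0, v) - A * ‖v‖ ^ 2 * t + M₀ * ‖v‖
    rw [e]
    have := hkey t ht
    linarith

open Topology in
set_option maxHeartbeats 1000000 in
theorem surj_of_mono {A : ℝ} (hA : 0 < A) (G : Ed d → (Ed d →L[ℝ] ℝ))
    (hG : ContDiff ℝ 1 G)
    (hm : ∀ y η, fderiv ℝ G y η η ≤ -A * ‖η‖ ^ 2) :
    Function.Surjective G := by
  have hdiffG : ∀ y, HasFDerivAt G (fderiv ℝ G y) y :=
    fun y => ((hG.differentiable (by norm_num)) y).hasFDerivAt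
  -- strong monotonicity
  have hmono : ∀ y w : Ed d, G (y + w) w ≤ G y w + -A * ‖w‖ ^ 2 := by
    intro y w
    have hline : ∀ t : ℝ,
        HasDerivAt (fun t : ℝ => G (y + t • w) w) (fderiv ℝ G (y + t • w) w w) t := by
      intro t
      have hl : HasDerivAt (fun t : ℝ => y + t • w) w t := by
        simpa using ((hasDerivAt_id t).smul_const w).const_add y
      have h1 : HasDerivAt (fun t : ℝ => G (y + t • w)) (fderiv ℝ G (y + t • w) w) t :=
        (hdiffG _).comp_hasDerivAt t hl
      exact (h1.clm_apply (hasDerivAt_const t w)).congr_deriv (by simp)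
    have := le_helper hline (c := -A * ‖w‖ ^ 2) (fun t _ => hm _ w)
    simpa using this
  have hgap : ∀ y₁ y₂ : Ed d, A * ‖y₁ - y₂‖ ≤ ‖G y₁ - G y₂‖ := by
    intro y₁ y₂
    rcases eq_or_ne y₁ y₂ with h | h
    · simp [h]
    · set w := y₁ - y₂ with hwdef
      have hw : w ≠ 0 := sub_ne_zero.2 h
      have hwpos : 0 < ‖w‖ := norm_pos_iff.2 hw
      have h1 : G y₁ w ≤ G y₂ w + -A * ‖w‖ ^ 2 := by
        have := hmono y₂ w
        rwa [show y₂ + w = y₁ by rw [hwdef]; abel] at this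
      have h3 : (G y₂ - G y₁) w ≤ ‖G y₂ - G y₁‖ * ‖w‖ := by
        calc (G y₂ - G y₁) w ≤ ‖(G y₂ - G y₁) w‖ := le_abs_self _
          _ ≤ ‖G y₂ - G y₁‖ * ‖w‖ := (G y₂ - G y₁).le_opNorm w
      have h4 : A * ‖w‖ ^ 2 ≤ ‖G y₂ - G y₁‖ * ‖w‖ := by
        have : (G y₂ - G y₁) w = G y₂ w - G y₁ w := by simp
        nlinarith
      have h5 : ‖G y₂ - G y₁‖ = ‖G y₁ - G y₂‖ := norm_sub_rev _ _
      rw [h5] at h4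
      calc A * ‖w‖ = (A * ‖w‖ ^ 2) / ‖w‖ := by field_simp
        _ ≤ (‖G y₁ - G y₂‖ * ‖w‖) / ‖w‖ := by exact div_le_div_of_nonneg_right h4 hwpos.le |>.trans_eq rfl
        _ = ‖G y₁ - G y₂‖ := by field_simp
  -- derivative is surjective
  have hdsurj : ∀ y, (fderiv ℝ G y).range = ⊤ := by
    intro y
    have hinj : Function.Injective (fderiv ℝ G y) := by
      intro η₁ η₂ hη
      by_contra hne
      have hz : η₁ - η₂ ≠ 0 := sub_ne_zero.2 hne
      have h0 : fderiv ℝ G y (η₁ - η₂) = 0 := by rw [map_sub, hη, sub_self]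
      have h1 := hm y (η₁ - η₂)
      rw [h0] at h1
      simp only [ContinuousLinearMap.zero_apply] at h1
      nlinarith [norm_pos_iff.2 hz, sq_nonneg ‖η₁ - η₂‖, mul_pos hA (pow_pos (norm_pos_iff.2 hz) 2)]
    rw [LinearMap.range_eq_top]
    have hfr : Module.finrank ℝ (Ed d) = Module.finrank ℝ (Ed d →L[ℝ] ℝ) := by
      rw [← (LinearMap.toContinuousLinearMap (E := Ed d) (F' := ℝ)).finrank_eq]
      rw [Module.finrank_linearMap_self]
    exact (LinearMap.injective_iff_surjective_of_finrank_eq_finrank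
      (f := (fderiv ℝ G y).toLinearMap) hfr).1 hinj
  -- range is open
  have hopen : IsOpen (Set.range G) := by
    rw [isOpen_iff_mem_nhds]
    rintro _ ⟨y, rfl⟩
    have hstrict : HasStrictFDerivAt G (fderiv ℝ G y) y :=
      hG.contDiffAt.hasStrictFDerivAt (by norm_num)
    rw [← hstrict.map_nhds_eq_of_surj (hdsurj y), Filter.mem_map]
    exact Filter.univ_mem' fun a => Set.mem_range_self a
  -- range is closed
  have hclosed : IsClosed (Set.range G) := by
    apply IsSeqClosed.isClosed
    intro f p hf hfp
    choose g hg using hf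
    have hcauchy : CauchySeq f := hfp.cauchySeq
    have hcg : CauchySeq g := by
      rw [Metric.cauchySeq_iff] at hcauchy ⊢
      intro ε hε
      obtain ⟨Nn, hN⟩ := hcauchy (A * ε) (by positivity)
      refine ⟨Nn, fun m hm' n hn => ?_⟩
      have h1 := hgap (g m) (g n)
      rw [hg m, hg n] at h1
      have h2 := hN m hm' n hn
      rw [dist_eq_norm] at h2 ⊢
      nlinarith [norm_nonneg (g m - g n)]
    obtain ⟨q, hq⟩ := cauchySeq_tendsto_of_complete hcg
    refine ⟨q, ?_⟩
    have hT : Filter.Tendsto (G ∘ g) Filter.atTop (𝓝 (G q)) :=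
      ((hG.continuous.tendsto q).comp hq)
    exact tendsto_nhds_unique (hT.congr hg) hfp
  -- conclude by connectedness
  have heq : Set.range G = Set.univ :=
    IsClopen.eq_univ ⟨hclosed, hopen⟩ ⟨G 0, 0, rfl⟩
  intro p
  have : p ∈ Set.range G := heq ▸ Set.mem_univ p
  exact this

set_option maxHeartbeats 1000000 in
theorem surjD1 (hC : ContDiff ℝ 2 S) {A : ℝ} (hA : 0 < A)
    (htw : ∀ (x y ξ : Ed d), iteratedFDeriv ℝ 2 S (x, y) ![(ξ, 0), (0, ξ)] ≤ -A * ‖ξ‖ ^ 2)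
    (a : Ed d) : Function.Surjective (fun y => D1 S a y) := by
  set T : ((Ed d × Ed d) →L[ℝ] ℝ) →L[ℝ] (Ed d →L[ℝ] ℝ) :=
    (ContinuousLinearMap.compL ℝ (Ed d) (Ed d × Ed d) ℝ).flip
      (ContinuousLinearMap.inl ℝ (Ed d) (Ed d)) with hT
  have hGdef : (fun y => D1 S a y) = fun y => T (fderiv ℝ S (a, y)) := by
    funext y; rw [D1, (hasFDerivAt_D1 hC a y).fderiv]; rfl
  rw [hGdef]
  have hder : ∀ y : Ed d, HasFDerivAt (fun y => T (fderiv ℝ S (a, y)))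
      (T.comp ((fderiv ℝ (fderiv ℝ S) (a, y)).comp (ContinuousLinearMap.inr ℝ (Ed d) (Ed d)))) y :=
    fun y => T.hasFDerivAt.comp y
      ((hasFDerivAt_F hC (a, y)).comp y (hasFDerivAt_prodMk_right a y))
  have hGC : ContDiff ℝ 1 (fun y : Ed d => T (fderiv ℝ S (a, y))) :=
    T.contDiff.comp ((contDiff_F hC).comp (contDiff_const.prodMk contDiff_id))
  apply surj_of_mono hA _ hGC
  intro y η
  rw [(hder y).fderiv]
  have : (T.comp ((fderiv ℝ (fderiv ℝ S) (a, y)).comp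
      (ContinuousLinearMap.inr ℝ (Ed d) (Ed d)))) η η
      = fderiv ℝ (fderiv ℝ S) (a, y) (0, η) (η, 0) := rfl
  rw [this]
  exact twist2 hC htw a y η

set_option maxHeartbeats 1000000 in
theorem surjD2 (hC : ContDiff ℝ 2 S) {A : ℝ} (hA : 0 < A)
    (htw : ∀ (x y ξ : Ed d), iteratedFDeriv ℝ 2 S (x, y) ![(ξ, 0), (0, ξ)] ≤ -A * ‖ξ‖ ^ 2)
    (b : Ed d) : Function.Surjective (fun x => D2 S x b) := by
  set T : ((Ed d × Ed d) →L[ℝ] ℝ) →L[ℝ] (Ed d →L[ℝ] ℝ) :=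
    (ContinuousLinearMap.compL ℝ (Ed d) (Ed d × Ed d) ℝ).flip
      (ContinuousLinearMap.inr ℝ (Ed d) (Ed d)) with hT
  have hGdef : (fun x => D2 S x b) = fun x => T (fderiv ℝ S (x, b)) := by
    funext x; rw [D2, (hasFDerivAt_D2 hC x b).fderiv]; rfl
  rw [hGdef]
  have hder : ∀ x : Ed d, HasFDerivAt (fun x => T (fderiv ℝ S (x, b)))
      (T.comp ((fderiv ℝ (fderiv ℝ S) (x, b)).comp (ContinuousLinearMap.inl ℝ (Ed d) (Ed d)))) x :=
    fun x => T.hasFDerivAt.comp x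
      ((hasFDerivAt_F hC (x, b)).comp x (hasFDerivAt_prodMk_left x b))
  have hGC : ContDiff ℝ 1 (fun x : Ed d => T (fderiv ℝ S (x, b))) :=
    T.contDiff.comp ((contDiff_F hC).comp (contDiff_id.prodMk contDiff_const))
  apply surj_of_mono hA _ hGC
  intro x η
  rw [(hder x).fderiv]
  have : (T.comp ((fderiv ℝ (fderiv ℝ S) (x, b)).comp
      (ContinuousLinearMap.inl ℝ (Ed d) (Ed d)))) η η
      = fderiv ℝ (fderiv ℝ S) (x, b) (η, 0) (0, η) := rfl
  rw [this]
  exact twist1 hC htw x b η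

theorem exists_next (hC : ContDiff ℝ 2 S) {A : ℝ} (hA : 0 < A)
    (htw : ∀ (x y ξ : Ed d), iteratedFDeriv ℝ 2 S (x, y) ![(ξ, 0), (0, ξ)] ≤ -A * ‖ξ‖ ^ 2)
    (u v : Ed d) : ∃ w, D2 S u v + D1 S v w = 0 := by
  obtain ⟨w, hw⟩ := surjD1 hC hA htw v (-(D2 S u v))
  exact ⟨w, by simp only at hw; rw [hw]; simp⟩

theorem exists_prev (hC : ContDiff ℝ 2 S) {A : ℝ} (hA : 0 < A)
    (htw : ∀ (x y ξ : Ed d), iteratedFDeriv ℝ 2 S (x, y) ![(ξ, 0), (0, ξ)] ≤ -A * ‖ξ‖ ^ 2)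
    (v w : Ed d) : ∃ u, D2 S u v + D1 S v w = 0 := by
  obtain ⟨u, hu⟩ := surjD2 hC hA htw v (-(D1 S v w))
  exact ⟨u, by simp only at hu; rw [hu]; simp⟩

theorem path_zero {x y : Ed d} {N : ℕ} {z : Fin (N - 1) → Ed d} : path x y N z 0 = x := by
  simp [path]

theorem path_N {x y : Ed d} {N : ℕ} (hN : 1 ≤ N) {z : Fin (N - 1) → Ed d} :
    path x y N z N = y := by
  simp [path]; omega

theorem path_mid {x y : Ed d} {N : ℕ} {z : Fin (N - 1) → Ed d} {k : ℕ}
    (h1 : 1 ≤ k) (h2 : k ≤ N - 1) (hN : 2 ≤ N) :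
    path x y N z k = z ⟨k - 1, by omega⟩ := by
  have h0 : k ≠ 0 := by omega
  have hlt : k < N := by omega
  simp [path, h0, hlt]

theorem path_cont {x y : Ed d} {N : ℕ} (k : ℕ) :
    Continuous fun z : Fin (N - 1) → Ed d => path x y N z k := by
  by_cases h0 : k = 0
  · simp only [path, h0]
    exact continuous_const
  · by_cases h : k < N
    · simp only [path, dif_neg h0, dif_pos h]
      exact continuous_apply _
    · simp only [path, dif_neg h0, dif_neg h]
      exact continuous_const

theorem fixedAct_cont (hC : ContDiff ℝ 2 S) {x y : Ed d} {N : ℕ} :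
    Continuous (fixedAct S x y N) := by
  unfold fixedAct act
  exact continuous_finset_sum _ fun k _ =>
    hC.continuous.comp ((path_cont k).prodMk (path_cont (k + 1)))

set_option maxHeartbeats 1000000 in
open Topology Filter in
theorem exists_fixedAct_min (hC : ContDiff ℝ 2 S) {A C₁ : ℝ} (hA : 0 < A) (hC₁ : 0 ≤ C₁)
    (hterm : ∀ a b : Ed d, A / 4 * ‖b - a‖ ^ 2 - C₁ ≤ S (a, b))
    (x y : Ed d) (N : ℕ) (hN : 2 ≤ N) :
    ∃ z : Fin (N - 1) → Ed d, ∀ w, fixedAct S x y N z ≤ fixedAct S x y N w := by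
  have hNpos : (0 : ℝ) < N := by positivity
  -- key lower bound
  have hkey : ∀ z : Fin (N - 1) → Ed d, ‖x‖ ≤ ‖z‖ →
      A / 4 * ((‖z‖ - ‖x‖) / N) ^ 2 - N * C₁ ≤ fixedAct S x y N z := by
    intro z hxz
    set γ := path x y N z with hγ
    set D := ‖z‖ - ‖x‖ with hD
    have hD0 : 0 ≤ D := by simp [hD]; linarith
    -- some coordinate attains the norm
    have hm : 0 < N - 1 := by omega
    haveI : Nonempty (Fin (N - 1)) := ⟨⟨0, hm⟩⟩
    obtain ⟨j, _, hj⟩ := Finset.exists_mem_eq_sup (Finset.univ : Finset (Fin (N - 1)))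
      Finset.univ_nonempty fun i => ‖z i‖₊
    have hznorm : ‖z‖ = ‖z j‖ := by
      rw [Pi.norm_def, hj]; simp
    -- telescoping
    have hγj : γ ((j : ℕ) + 1) = z j := by
      rw [hγ, path_mid (by omega) (by omega : (j:ℕ) + 1 ≤ N - 1) hN]
      congr
    have htel : D ≤ ∑ i ∈ Finset.range N, dist (γ i) (γ (i + 1)) := by
      have h1 : dist (γ 0) (γ ((j : ℕ) + 1)) ≤
          ∑ i ∈ Finset.range ((j : ℕ) + 1), dist (γ i) (γ (i + 1)) :=
        dist_le_range_sum_dist γ ((j : ℕ) + 1)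
      have h2 : ∑ i ∈ Finset.range ((j : ℕ) + 1), dist (γ i) (γ (i + 1)) ≤
          ∑ i ∈ Finset.range N, dist (γ i) (γ (i + 1)) := by
        apply Finset.sum_le_sum_of_subset_of_nonneg
        · apply Finset.range_subset_range.2; omega
        · intro i _ _; exact dist_nonneg
      have h3 : D ≤ dist (γ 0) (γ ((j : ℕ) + 1)) := by
        rw [hγj, hγ, path_zero, dist_eq_norm, norm_sub_rev, hD, hznorm]
        exact norm_sub_norm_le (z j) x
      linarith
    -- some step is large
    have hstep : ∃ i ∈ Finset.range N, D / N ≤ dist (γ i) (γ (i + 1)) := by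
      by_contra hcon
      push_neg at hcon
      have : ∑ i ∈ Finset.range N, dist (γ i) (γ (i + 1)) <
          ∑ _i ∈ Finset.range N, D / N := by
        apply Finset.sum_lt_sum_of_nonempty
        · exact ⟨0, Finset.mem_range.2 (by omega)⟩
        · exact hcon
      rw [Finset.sum_const, Finset.card_range, nsmul_eq_mul] at this
      rw [mul_div_cancel₀ _ (ne_of_gt hNpos)] at this
      linarith
    obtain ⟨i₀, hi₀, hstep₀⟩ := hstep
    -- lower bound for the action
    have hsplit : fixedAct S x y N z =
        S (γ i₀, γ (i₀ + 1)) + ∑ i ∈ (Finset.range N).erase i₀, S (γ i, γ (i + 1)) := by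
      rw [fixedAct, act]
      exact (Finset.add_sum_erase _ _ hi₀).symm
    have hrest : -(((N : ℝ) - 1) * C₁) ≤ ∑ i ∈ (Finset.range N).erase i₀, S (γ i, γ (i + 1)) := by
      have hcard : ((Finset.range N).erase i₀).card = N - 1 := by
        rw [Finset.card_erase_of_mem hi₀, Finset.card_range]
      have h1 : ∀ i ∈ (Finset.range N).erase i₀, -C₁ ≤ S (γ i, γ (i + 1)) := by
        intro i _
        have := hterm (γ i) (γ (i + 1))
        nlinarith [sq_nonneg ‖γ (i + 1) - γ i‖, hA.le]
      have := Finset.card_nsmul_le_sum ((Finset.range N).erase i₀) _ (-C₁) h1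
      rw [hcard, nsmul_eq_mul] at this
      have hc : ((N - 1 : ℕ) : ℝ) = (N : ℝ) - 1 := by
        push_cast [Nat.cast_sub (by omega : 1 ≤ N)]; ring
      rw [hc] at this
      linarith
    have hbig : A / 4 * (D / N) ^ 2 - C₁ ≤ S (γ i₀, γ (i₀ + 1)) := by
      have h1 := hterm (γ i₀) (γ (i₀ + 1))
      have h2 : ‖γ (i₀ + 1) - γ i₀‖ = dist (γ i₀) (γ (i₀ + 1)) := by
        rw [dist_eq_norm, norm_sub_rev]
      have h3 : D / N ≤ ‖γ (i₀ + 1) - γ i₀‖ := by rw [h2]; exact hstep₀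
      have h4 : (D / N) ^ 2 ≤ ‖γ (i₀ + 1) - γ i₀‖ ^ 2 :=
        pow_le_pow_left₀ (by positivity) h3 2
      nlinarith
    rw [hsplit]
    nlinarith
  -- tendsto cocompact
  have htend : Tendsto (fixedAct S x y N) (cocompact _) atTop := by
    rw [tendsto_atTop]
    intro C
    rw [Filter.hasBasis_cocompact.eventually_iff]
    set u : ℝ := (4 / A) * (|C| + N * C₁) with hu
    have hu0 : 0 ≤ u := by positivity
    set R : ℝ := ‖x‖ + N * Real.sqrt u with hR
    refine ⟨Metric.closedBall 0 R, isCompact_closedBall _ _, fun z hz => ?_⟩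
    have hzR : R < ‖z‖ := by
      simp only [Set.mem_compl_iff, Metric.mem_closedBall, dist_zero_right, not_le] at hz
      exact hz
    have hxz : ‖x‖ ≤ ‖z‖ := by
      have := Real.sqrt_nonneg u
      nlinarith
    have h1 := hkey z hxz
    have h2 : Real.sqrt u ≤ (‖z‖ - ‖x‖) / N := by
      rw [le_div_iff₀ hNpos]
      nlinarith
    have h3 : u ≤ ((‖z‖ - ‖x‖) / N) ^ 2 := by
      have := Real.sq_sqrt hu0
      nlinarith [Real.sqrt_nonneg u, pow_le_pow_left₀ (Real.sqrt_nonneg u) h2 2]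
    have h4 : |C| + N * C₁ ≤ A / 4 * ((‖z‖ - ‖x‖) / N) ^ 2 := by
      have : A / 4 * u = |C| + N * C₁ := by
        rw [hu]; field_simp
      nlinarith
    have := le_abs_self C
    linarith
  obtain ⟨z, hz⟩ := (fixedAct_cont hC).exists_forall_le htend
  exact ⟨z, hz⟩

theorem path_ge {x y : Ed d} {N : ℕ} {z : Fin (N - 1) → Ed d} {k : ℕ}
    (hN : 1 ≤ N) (hk : N ≤ k) : path x y N z k = y := by
  have h0 : k ≠ 0 := by omega
  have h1 : ¬ k < N := by omega
  simp [path, h0, h1]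

set_option maxHeartbeats 1000000 in
theorem exists_segment (hC : ContDiff ℝ 2 S)
    (hper : ∀ (r : Fin d → ℤ) (x y : Ed d), S (x + intVec d r, y + intVec d r) = S (x, y))
    {A : ℝ} (hA : 0 < A)
    (htw : ∀ (x y ξ : Ed d), iteratedFDeriv ℝ 2 S (x, y) ![(ξ, 0), (0, ξ)] ≤ -A * ‖ξ‖ ^ 2)
    (x y : Ed d) (N : ℕ) (hN : 1 ≤ N) :
    ∃ γ : ℕ → Ed d, γ 0 = x ∧ γ N = y ∧ ∀ n : ℕ, 1 ≤ n → n + 1 ≤ N →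
      D2 S (γ (n - 1)) (γ n) + D1 S (γ n) (γ (n + 1)) = 0 := by
  rcases eq_or_lt_of_le hN with h1 | h2
  · refine ⟨fun k => if k = 0 then x else y, by simp, by rw [← h1]; simp, ?_⟩
    intro n hn hn1
    omega
  · have hN2 : 2 ≤ N := h2
    obtain ⟨M₀, M₁, hM₀0, hM₁0, hM₀, hM₁⟩ := exists_bounds hC hper
    obtain ⟨C₁, hC₁0, hterm⟩ :
        ∃ C₁, 0 ≤ C₁ ∧ ∀ a b : Ed d, A / 4 * ‖b - a‖ ^ 2 - C₁ ≤ S (a, b) := by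
      refine ⟨M₁ + M₀ ^ 2 / A, by positivity, fun a b => ?_⟩
      have h := superlinear hC hA htw hM₀ hM₁ a (b - a)
      rw [add_sub_cancel] at h
      set t := ‖b - a‖ with ht
      have ht0 : 0 ≤ t := norm_nonneg _
      have hAB : A * (M₀ ^ 2 / A) = M₀ ^ 2 := by field_simp
      nlinarith [sq_nonneg (A * t - 2 * M₀)]
    obtain ⟨z, hz⟩ := exists_fixedAct_min hC hA hC₁0 hterm x y N hN2
    set γ := path x y N z with hγ
    refine ⟨γ, path_zero, path_N (by omega), ?_⟩
    intro n hn hn1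
    set j : Fin (N - 1) := ⟨n - 1, by omega⟩ with hj
    have hγn : γ n = z j := by
      rw [hγ, path_mid hn (by omega) hN2]
    set Φ : Ed d → ℝ := fun w => S (γ (n - 1), w) + S (w, γ (n + 1)) with hΦ
    have hminh : ∀ w, Φ (γ n) ≤ Φ w := by
      intro w
      have hγ'n : path x y N (Function.update z j w) n = w := by
        rw [path_mid hn (by omega) hN2]
        exact Function.update_self _ _ _
      have hγ'm : ∀ i : ℕ, i ≠ n → path x y N (Function.update z j w) i = γ i := by
        intro i hi
        by_cases h0 : i = 0
        · rw [h0, path_zero, hγ, path_zero]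
        · by_cases hlt : i < N
          · rw [path_mid (by omega) (by omega) hN2, hγ, path_mid (by omega) (by omega) hN2]
            rw [Function.update_of_ne]
            exact fun hcon => hi (by
              have h2 : i - 1 = n - 1 := congrArg Fin.val hcon
              omega)
          · rw [path_ge (by omega) (by omega), hγ, path_ge (by omega) (by omega)]
      have hdiff : fixedAct S x y N (Function.update z j w) - fixedAct S x y N z
          = Φ w - Φ (γ n) := by
        rw [fixedAct, fixedAct, act, act, ← Finset.sum_sub_distrib]
        have hsub : ({n - 1, n} : Finset ℕ) ⊆ Finset.range N := by
          intro i hi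
          simp only [Finset.mem_insert, Finset.mem_singleton] at hi
          rcases hi with h | h <;> (rw [h]; exact Finset.mem_range.2 (by omega))
        have hzero : ∀ i ∈ Finset.range N, i ∉ ({n - 1, n} : Finset ℕ) →
            S (path x y N (Function.update z j w) i, path x y N (Function.update z j w) (i + 1))
              - S (γ i, γ (i + 1)) = 0 := by
          intro i _ hnot
          simp only [Finset.mem_insert, Finset.mem_singleton, not_or] at hnot
          rw [hγ'm i hnot.2, hγ'm (i + 1) (by omega), sub_self]
        rw [← Finset.sum_subset hsub hzero]
        rw [Finset.sum_pair (by omega : n - 1 ≠ n)]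
        have e1 : n - 1 + 1 = n := by omega
        rw [e1, hγ'n, hγ'm (n - 1) (by omega), hγ'm (n + 1) (by omega)]
        simp only [hΦ]
        ring
      have hle := hz (Function.update z j w)
      simp only [hΦ] at hdiff ⊢
      linarith
    have hfd : HasFDerivAt Φ (D2 S (γ (n - 1)) (γ n) + D1 S (γ n) (γ (n + 1))) (γ n) :=
      (hasFDerivAt_D2' hC (γ (n - 1)) (γ n)).add (hasFDerivAt_D1' hC (γ n) (γ (n + 1)))
    have hloc : IsLocalMin Φ (γ n) := Filter.Eventually.of_forall hminh
    exact hloc.hasFDerivAt_eq_zero hfd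

end Stmt1

set_option maxHeartbeats 1000000 in
/-- For every `x, y ∈ ℝ^d` and every integer `N ≥ 1`, there exists an extremal sequence
`(x_n)_{n∈ℤ}` such that `x_0 = x` and `x_N = y`. -/
theorem stmt_1 (d : ℕ) (hd : 1 ≤ d) (S : Ed d × Ed d → ℝ) (hS : IsGenFn S) :
    ∀ (x y : Ed d) (N : ℕ), 1 ≤ N →
      ∃ u : ℤ → Ed d, IsExtremal S u ∧ u 0 = x ∧ u (N : ℤ) = y := by
  classical
  obtain ⟨hC, hper, A, hA, htw⟩ := hS
  intro x y N hN
  obtain ⟨γ, hγ0, hγN, hγext⟩ := Stmt1.exists_segment hC hper hA htw x y N hN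
  have hnext := Stmt1.exists_next hC hA htw
  have hprev := Stmt1.exists_prev hC hA htw
  -- forward orbit
  obtain ⟨c, hc0, hc1, hcext⟩ : ∃ c : ℕ → Ed d, c 0 = γ (N - 1) ∧ c 1 = γ N ∧
      ∀ k, D2 S (c k) (c (k + 1)) + D1 S (c (k + 1)) (c (k + 2)) = 0 := by
    let fwd : ℕ → Ed d × Ed d := fun k =>
      Nat.rec (γ (N - 1), γ N) (fun _ p => (p.2, Classical.choose (hnext p.1 p.2))) k
    refine ⟨fun k => (fwd k).1, rfl, rfl, fun k => ?_⟩
    exact Classical.choose_spec (hnext (fwd k).1 (fwd k).2)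
  -- backward orbit
  obtain ⟨b, hb0, hbext, hbzero⟩ : ∃ b : ℕ → Ed d, b 0 = γ 0 ∧
      (∀ k, 1 ≤ k → D2 S (b (k + 1)) (b k) + D1 S (b k) (b (k - 1)) = 0) ∧
      D2 S (b 1) (b 0) + D1 S (b 0) (γ 1) = 0 := by
    let bwd : ℕ → Ed d × Ed d := fun k =>
      Nat.rec (γ 0, γ 1) (fun _ p => (Classical.choose (hprev p.1 p.2), p.1)) k
    refine ⟨fun k => (bwd k).1, rfl, ?_, ?_⟩
    · intro k hk
      obtain ⟨j, rfl⟩ : ∃ j, k = j + 1 := ⟨k - 1, by omega⟩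
      exact Classical.choose_spec (hprev (bwd (j + 1)).1 (bwd (j + 1)).2)
    · exact Classical.choose_spec (hprev (bwd 0).1 (bwd 0).2)
  set u : ℤ → Ed d := fun n =>
    if n < 0 then b (-n).toNat else if n ≤ (N : ℤ) then γ n.toNat
    else c (n - N + 1).toNat with hu
  have hu_mid : ∀ n : ℤ, 0 ≤ n → n ≤ (N : ℤ) → u n = γ n.toNat := by
    intro n h1 h2
    rw [hu]; simp only [if_neg (by omega : ¬ n < 0), if_pos h2]
  have hu_neg : ∀ n : ℤ, n ≤ 0 → u n = b (-n).toNat := by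
    intro n hn
    rcases lt_or_eq_of_le hn with h | h
    · rw [hu]; simp only [if_pos h]
    · rw [h]
      have h2 := hu_mid 0 le_rfl (by positivity)
      simp only [Int.toNat_zero] at h2
      simp only [neg_zero, Int.toNat_zero]
      rw [h2, hb0]
  have hu_c : ∀ n : ℤ, (N : ℤ) - 1 ≤ n → u n = c (n - N + 1).toNat := by
    intro n h1
    rcases le_or_gt n N with h2 | h2
    · rw [hu_mid n (by omega) h2]
      have : n = (N : ℤ) ∨ n = (N : ℤ) - 1 := by omega
      rcases this with h | h
      · rw [h]
        have e1 : ((N : ℤ) - N + 1).toNat = 1 := by omega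
        have e2 : ((N : ℤ)).toNat = N := by omega
        rw [e1, e2, hc1]
      · rw [h]
        have e1 : ((N : ℤ) - 1 - N + 1).toNat = 0 := by omega
        have e2 : ((N : ℤ) - 1).toNat = N - 1 := by omega
        rw [e1, e2, hc0]
    · rw [hu]; simp only [if_neg (by omega : ¬ n < 0), if_neg (by omega : ¬ n ≤ (N:ℤ))]
  refine ⟨u, ?_, ?_, ?_⟩
  · -- extremality
    intro n
    by_cases hneg : n < 0
    · have e1 : u (n - 1) = b ((-n).toNat + 1) := by
        have ee : (-(n - 1)).toNat = (-n).toNat + 1 := by omega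
        rw [hu_neg (n - 1) (by omega), ee]
      have e2 : u n = b (-n).toNat := hu_neg n (by omega)
      have e3 : u (n + 1) = b ((-n).toNat - 1) := by
        have ee : (-(n + 1)).toNat = (-n).toNat - 1 := by omega
        rw [hu_neg (n + 1) (by omega), ee]
      rw [e1, e2, e3]
      exact hbext (-n).toNat (by omega)
    · by_cases hzero : n = 0
      · subst hzero
        have e1 : u (0 - 1) = b 1 := by
          simpa using hu_neg (0 - 1) (by omega)
        have e2 : u 0 = γ 0 := by
          simpa using hu_mid 0 le_rfl (by positivity)
        have e3 : u (0 + 1) = γ 1 := by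
          simpa using hu_mid (0 + 1) (by omega) (by omega)
        rw [e1, e2, e3, ← hb0]
        exact hbzero
      · by_cases hmid : n ≤ (N : ℤ) - 1
        · have hn1 : 1 ≤ n := by omega
          have hm : ((n.toNat : ℤ)) = n := Int.toNat_of_nonneg (by omega)
          have e1 : u (n - 1) = γ (n.toNat - 1) := by
            have ee : (n - 1).toNat = n.toNat - 1 := by omega
            rw [hu_mid (n - 1) (by omega) (by omega), ee]
          have e2 : u n = γ n.toNat := hu_mid n (by omega) (by omega)
          have e3 : u (n + 1) = γ (n.toNat + 1) := by
            have ee : (n + 1).toNat = n.toNat + 1 := by omega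
            rw [hu_mid (n + 1) (by omega) (by omega), ee]
          rw [e1, e2, e3]
          exact hγext n.toNat (by omega) (by omega)
        · have hnN : (N : ℤ) ≤ n := by omega
          set k := (n - N + 1).toNat with hk
          have hkn : ((k : ℤ)) = n - N + 1 := Int.toNat_of_nonneg (by omega)
          have hk1 : 1 ≤ k := by omega
          have e1 : u (n - 1) = c (k - 1) := by
            have ee : (n - 1 - N + 1).toNat = k - 1 := by omega
            rw [hu_c (n - 1) (by omega), ee]
          have e2 : u n = c k := by
            rw [hu_c n (by omega)]
          have e3 : u (n + 1) = c (k + 1) := by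
            have ee : (n + 1 - N + 1).toNat = k + 1 := by omega
            rw [hu_c (n + 1) (by omega), ee]
          rw [e1, e2, e3]
          have := hcext (k - 1)
          have f1 : k - 1 + 1 = k := by omega
          have f2 : k - 1 + 2 = k + 1 := by omega
          rw [f1, f2] at this
          exact this
  · rw [hu_mid 0 le_rfl (by positivity)]
    simpa using hγ0
  · rw [hu_mid (N : ℤ) (by positivity) le_rfl]
    simpa using hγN

end
end

section
/- For every (x,y) ∈ ℝ^d × ℝ^d there exists a unique extremal sequence (x_n)_{n∈ℤ} with x_0 = x and x_1 = y. -/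
noncomputable section

/-! The twist condition makes `y ↦ ∂₁S(x, y)`, a map from `ℝ^d` to its dual, strongly monotone:
its derivative `η ↦ ∂₂∂₁S(x, y) η` satisfies `∂₂∂₁S(x, y) η η ≤ -A‖η‖²`. Such a map is antilipschitz,
hence proper with closed range, and a local diffeomorphism, hence open; so it is a bijection.
The same holds for `x ↦ ∂₂S(x, y)`. The extremal equation thus determines `x_{n+1}` from
`(x_{n-1}, x_n)` and `x_{n-1}` from `(x_n, x_{n+1})`: the map `(x_{n-1}, x_n) ↦ (x_n, x_{n+1})` is a
bijection of `ℝ^d × ℝ^d`, and its orbit through `(x, y)` is the unique extremal sequence. -/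

open Function Set

section StronglyMonotone

variable {E : Type*} [NormedAddCommGroup E] [NormedSpace ℝ E] {f : E → E →L[ℝ] ℝ} {A : ℝ}

theorem apply_sub_le_of_fderiv_apply_le (hf : Differentiable ℝ f)
    (hf' : ∀ z η, fderiv ℝ f z η η ≤ -A * ‖η‖ ^ 2) (a b : E) :
    (f a - f b) (a - b) ≤ -A * ‖a - b‖ ^ 2 := by
  set v := a - b
  let g : ℝ → ℝ := fun t => f (b + t • v) v
  have hg : ∀ t, HasDerivAt g (fderiv ℝ f (b + t • v) v v) t := by
    intro t
    have hline : HasDerivAt (fun t : ℝ => b + t • v) v t := by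
      simpa using ((hasDerivAt_id t).smul_const v).const_add b
    exact ((hf _).hasFDerivAt.comp_hasDerivAt t hline).clm_apply (hasDerivAt_const t v)
      |>.congr_deriv (by simp)
  have := image_sub_le_mul_sub_of_deriv_le (fun t => (hg t).differentiableAt)
    (fun t => (hg t).deriv ▸ hf' _ v) zero_le_one
  simpa [g, v] using this

theorem mul_norm_sub_le_of_fderiv_apply_le (hf : Differentiable ℝ f)
    (hf' : ∀ z η, fderiv ℝ f z η η ≤ -A * ‖η‖ ^ 2) (a b : E) :
    A * ‖a - b‖ ≤ ‖f a - f b‖ := by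
  rcases (norm_nonneg (a - b)).eq_or_lt with h | h
  · rw [← h, mul_zero]; exact norm_nonneg _
  have hle : A * ‖a - b‖ * ‖a - b‖ ≤ ‖f a - f b‖ * ‖a - b‖ :=
    calc A * ‖a - b‖ * ‖a - b‖ ≤ -(f a - f b) (a - b) := by
          nlinarith [apply_sub_le_of_fderiv_apply_le hf hf' a b]
      _ ≤ ‖(f a - f b) (a - b)‖ := neg_le_abs _
      _ ≤ ‖f a - f b‖ * ‖a - b‖ := (f a - f b).le_opNorm _
  exact le_of_mul_le_mul_right hle h

theorem antilipschitzWith_of_fderiv_apply_le (hA : 0 < A) (hf : Differentiable ℝ f)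
    (hf' : ∀ z η, fderiv ℝ f z η η ≤ -A * ‖η‖ ^ 2) :
    AntilipschitzWith (Real.toNNReal A⁻¹) f := by
  refine AntilipschitzWith.of_le_mul_dist fun a b => ?_
  rw [dist_eq_norm, dist_eq_norm, Real.coe_toNNReal _ (inv_nonneg.2 hA.le),
    ← div_eq_inv_mul, le_div_iff₀' hA]
  exact mul_norm_sub_le_of_fderiv_apply_le hf hf' a b

theorem injective_fderiv_of_fderiv_apply_le (hA : 0 < A)
    (hf' : ∀ z η, fderiv ℝ f z η η ≤ -A * ‖η‖ ^ 2) (z : E) : Injective (fderiv ℝ f z) := by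
  refine (injective_iff_map_eq_zero _).2 fun η hη => norm_eq_zero.1 ?_
  have hle := hf' z η
  rw [hη, zero_apply] at hle
  exact pow_eq_zero_iff two_ne_zero |>.1 <|
    le_antisymm (nonpos_of_mul_nonpos_right (by linarith) hA) (sq_nonneg _)

variable [FiniteDimensional ℝ E]

theorem isOpenMap_of_fderiv_apply_le (hA : 0 < A) (hf : ContDiff ℝ 1 f)
    (hf' : ∀ z η, fderiv ℝ f z η η ≤ -A * ‖η‖ ^ 2) : IsOpenMap f := by
  have hdim : Module.finrank ℝ E = Module.finrank ℝ (E →L[ℝ] ℝ) := by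
    rw [← LinearMap.toContinuousLinearMap.finrank_eq, Subspace.dual_finrank_eq]
  have hbij : ∀ z, Bijective (fderiv ℝ f z) := fun z =>
    have hinj := injective_fderiv_of_fderiv_apply_le hA hf' z
    ⟨hinj, (LinearMap.injective_iff_surjective_of_finrank_eq_finrank hdim).1 hinj⟩
  refine isOpenMap_of_hasStrictFDerivAt_equiv
    (f' := fun z => (LinearEquiv.ofBijective _ (hbij z)).toContinuousLinearEquiv) fun z => ?_
  exact hf.contDiffAt.hasStrictFDerivAt one_ne_zero

theorem isClosed_range_of_fderiv_apply_le (hA : 0 < A) (hf : ContDiff ℝ 1 f)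
    (hf' : ∀ z η, fderiv ℝ f z η η ≤ -A * ‖η‖ ^ 2) : IsClosed (range f) := by
  have hanti := antilipschitzWith_of_fderiv_apply_le hA (hf.differentiable one_ne_zero) hf'
  refine (isProperMap_iff_isCompact_preimage.2 ⟨hf.continuous, fun K hK => ?_⟩).isClosed_range
  exact Metric.isCompact_of_isClosed_isBounded (hK.isClosed.preimage hf.continuous)
    (hanti.isBounded_preimage hK.isBounded)

theorem bijective_of_fderiv_apply_le (hA : 0 < A) (hf : ContDiff ℝ 1 f)
    (hf' : ∀ z η, fderiv ℝ f z η η ≤ -A * ‖η‖ ^ 2) : Bijective f := by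
  refine ⟨(antilipschitzWith_of_fderiv_apply_le hA (hf.differentiable one_ne_zero) hf').injective,
    range_eq_univ.1 ?_⟩
  exact IsClopen.eq_univ ⟨isClosed_range_of_fderiv_apply_le hA hf hf',
    (isOpenMap_of_fderiv_apply_le hA hf hf').isOpen_range⟩ (range_nonempty f)

end StronglyMonotone

section Recurrence

variable {α : Type*} {R : α → α → α → Prop}

theorem seq_eq_of_recurrence (hfwd : ∀ a b, ∃! c, R a b c) (hbwd : ∀ b c, ∃! a, R a b c)
    {u v : ℤ → α} (hu : ∀ n, R (u (n - 1)) (u n) (u (n + 1)))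
    (hv : ∀ n, R (v (n - 1)) (v n) (v (n + 1))) (h0 : u 0 = v 0) (h1 : u 1 = v 1) : u = v := by
  suffices h : ∀ n : ℤ, u n = v n ∧ u (n + 1) = v (n + 1) from funext fun n => (h n).1
  intro n
  induction n using Int.induction_on with
  | zero => exact ⟨h0, h1⟩
  | succ n ih =>
    refine ⟨ih.2, (hfwd (u n) (u (n + 1))).unique ?_ ?_⟩
    · simpa using hu (n + 1)
    · simpa [ih.1, ih.2] using hv (n + 1)
  | pred n ih =>
    refine ⟨(hbwd (u (-n)) (u (-n + 1))).unique ?_ ?_, by simpa using ih.1⟩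
    · simpa using hu (-n)
    · simpa [ih.1, ih.2] using hv (-n)

theorem exists_seq_of_recurrence (hfwd : ∀ a b, ∃! c, R a b c) (hbwd : ∀ b c, ∃! a, R a b c)
    (x y : α) : ∃ u : ℤ → α, (∀ n, R (u (n - 1)) (u n) (u (n + 1))) ∧ u 0 = x ∧ u 1 = y := by
  choose next hnext hnext_unique using hfwd
  choose prev hprev hprev_unique using hbwd
  let e : Equiv.Perm (α × α) :=
    { toFun p := (p.2, next p.1 p.2)
      invFun p := (prev p.1 p.2, p.1)
      left_inv p := by simp [← hprev_unique _ _ p.1 (hnext p.1 p.2)]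
      right_inv p := by simp [← hnext_unique _ _ p.2 (hprev p.1 p.2)] }
  have he : ∀ n : ℤ, (e ^ (n + 1)) (x, y) = e ((e ^ n) (x, y)) := fun n => by
    rw [add_comm, zpow_one_add]; rfl
  refine ⟨fun n => ((e ^ n) (x, y)).1, fun n => ?_, rfl, rfl⟩
  have hn := he (n - 1)
  rw [sub_add_cancel] at hn
  simp only [he n, hn]
  exact hnext _ _

theorem existsUnique_seq_of_recurrence (hfwd : ∀ a b, ∃! c, R a b c)
    (hbwd : ∀ b c, ∃! a, R a b c) (x y : α) :
    ∃! u : ℤ → α, (∀ n, R (u (n - 1)) (u n) (u (n + 1))) ∧ u 0 = x ∧ u 1 = y := by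
  obtain ⟨u, hu, hu0, hu1⟩ := exists_seq_of_recurrence hfwd hbwd x y
  exact ⟨u, ⟨hu, hu0, hu1⟩, fun v ⟨hv, hv0, hv1⟩ =>
    seq_eq_of_recurrence hfwd hbwd hv hu (hv0.trans hu0.symm) (hv1.trans hu1.symm)⟩

end Recurrence

section Twist

variable {d : ℕ} {S : Ed d × Ed d → ℝ}

theorem D1_eq_fderiv_comp_inl (hS : Differentiable ℝ S) (x y : Ed d) :
    D1 S x y = (fderiv ℝ S (x, y)).comp (.inl ℝ (Ed d) (Ed d)) :=
  ((hS _).hasFDerivAt.comp x (hasFDerivAt_prodMk_left x y)).fderiv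

theorem D2_eq_fderiv_comp_inr (hS : Differentiable ℝ S) (x y : Ed d) :
    D2 S x y = (fderiv ℝ S (x, y)).comp (.inr ℝ (Ed d) (Ed d)) :=
  ((hS _).hasFDerivAt.comp y (hasFDerivAt_prodMk_right x y)).fderiv

theorem contDiff_D1 (hS : ContDiff ℝ 2 S) (x : Ed d) : ContDiff ℝ 1 (D1 S x) := by
  rw [funext (D1_eq_fderiv_comp_inl (hS.differentiable two_ne_zero) x)]
  exact ((hS.fderiv_right one_add_one_eq_two.le).comp
    (contDiff_const.prodMk contDiff_id)).clm_comp contDiff_const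

theorem contDiff_D2 (hS : ContDiff ℝ 2 S) (y : Ed d) : ContDiff ℝ 1 (fun x => D2 S x y) := by
  rw [funext fun x => D2_eq_fderiv_comp_inr (hS.differentiable two_ne_zero) x y]
  exact ((hS.fderiv_right one_add_one_eq_two.le).comp
    (contDiff_id.prodMk contDiff_const)).clm_comp contDiff_const

theorem fderiv_D1_apply (hS : ContDiff ℝ 2 S) (x y η ξ : Ed d) :
    fderiv ℝ (D1 S x) y η ξ = fderiv ℝ (fderiv ℝ S) (x, y) (0, η) (ξ, 0) := by
  have hslice : HasFDerivAt (fun y => fderiv ℝ S (x, y))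
      ((fderiv ℝ (fderiv ℝ S) (x, y)).comp (.inr ℝ (Ed d) (Ed d))) y :=
    ((hS.fderiv_right one_add_one_eq_two.le).differentiable one_ne_zero _).hasFDerivAt.comp y
      (hasFDerivAt_prodMk_right x y)
  rw [funext (D1_eq_fderiv_comp_inl (hS.differentiable two_ne_zero) x),
    (hslice.clm_comp (hasFDerivAt_const _ y)).fderiv]
  simp

theorem fderiv_D2_apply (hS : ContDiff ℝ 2 S) (x y η ξ : Ed d) :
    fderiv ℝ (fun x => D2 S x y) x η ξ = fderiv ℝ (fderiv ℝ S) (x, y) (η, 0) (0, ξ) := by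
  have hslice : HasFDerivAt (fun x => fderiv ℝ S (x, y))
      ((fderiv ℝ (fderiv ℝ S) (x, y)).comp (.inl ℝ (Ed d) (Ed d))) x :=
    ((hS.fderiv_right one_add_one_eq_two.le).differentiable one_ne_zero _).hasFDerivAt.comp x
      (hasFDerivAt_prodMk_left x y)
  rw [funext fun x => D2_eq_fderiv_comp_inr (hS.differentiable two_ne_zero) x y,
    (hslice.clm_comp (hasFDerivAt_const _ x)).fderiv]
  simp

variable {A : ℝ}

theorem bijective_D1 (hS : ContDiff ℝ 2 S) (hA : 0 < A)
    (htw : ∀ x y ξ : Ed d, iteratedFDeriv ℝ 2 S (x, y) ![(ξ, 0), (0, ξ)] ≤ -A * ‖ξ‖ ^ 2)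
    (x : Ed d) : Bijective (D1 S x) := by
  refine bijective_of_fderiv_apply_le hA (contDiff_D1 hS x) fun y ξ => ?_
  rw [fderiv_D1_apply hS, ← (hS.contDiffAt.isSymmSndFDerivAt (by simp)) _ _]
  simpa [iteratedFDeriv_two_apply] using htw x y ξ

theorem bijective_D2 (hS : ContDiff ℝ 2 S) (hA : 0 < A)
    (htw : ∀ x y ξ : Ed d, iteratedFDeriv ℝ 2 S (x, y) ![(ξ, 0), (0, ξ)] ≤ -A * ‖ξ‖ ^ 2)
    (y : Ed d) : Bijective (fun x => D2 S x y) := by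
  refine bijective_of_fderiv_apply_le hA (contDiff_D2 hS y) fun x ξ => ?_
  rw [fderiv_D2_apply hS]
  simpa [iteratedFDeriv_two_apply] using htw x y ξ

end Twist

theorem stmt_2_general (d : ℕ) (S : Ed d × Ed d → ℝ) (hS : IsGenFn S) :
    ∀ x y : Ed d, ∃! u : ℤ → Ed d, IsExtremal S u ∧ u 0 = x ∧ u 1 = y := by
  obtain ⟨hS2, -, A, hA, htw⟩ := hS
  refine existsUnique_seq_of_recurrence (R := fun a b c => D2 S a b + D1 S b c = 0)
    (fun a b => ?_) (fun b c => ?_)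
  · simpa only [add_eq_zero_iff_eq_neg'] using (bijective_D1 hS2 hA htw b).existsUnique _
  · simpa only [add_eq_zero_iff_eq_neg] using (bijective_D2 hS2 hA htw b).existsUnique _

/-- For every `(x,y) ∈ ℝ^d × ℝ^d` there exists a unique extremal sequence `(x_n)_{n∈ℤ}`
with `x_0 = x` and `x_1 = y`. -/
theorem stmt_2 (d : ℕ) (hd : 1 ≤ d) (S : Ed d × Ed d → ℝ) (hS : IsGenFn S) :
    ∀ x y : Ed d, ∃! u : ℤ → Ed d, IsExtremal S u ∧ u 0 = x ∧ u 1 = y :=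
  stmt_2_general d S hS

end
end

section
/- Assume S has no conjugate points. For all x, y, z ∈ ℝ^d and all integers N, N' ≥ 1, one has the triangular inequality A_{N+N'}(x,z) ≤ A_N(x,y) + A_{N'}(y,z); moreover, equality holds if and only if y = w_N, where (w_n)_{n∈ℤ} is the unique extremal sequence with w_0 = x and w_{N+N'} = z. -/
noncomputable section

/-!
Gluing minimizers of `S_{x,y,N}` and `S_{y,z,N'}` at `y` gives a configuration for
`S_{x,z,N+N'}` with action `A_N(x,y) + A_{N'}(y,z)`, whence the inequality. In case of equality
the glued configuration is a global minimizer, hence a critical point, hence the unique critical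
point `c` of `S_{x,z,N+N'}`; conversely, splitting `c` at time `N` realizes equality with
`y = c_N`. Finally, the interior of an extremal sequence from `x` to `z` satisfies the discrete
Euler–Lagrange equations, so it is critical as well and `c_N = w_N`.
-/

theorem Finset.sum_range_succ_add_shift {M : Type*} [AddCommMonoid M] (α β : ℕ → M)
    (n : ℕ) :
    ∑ k ∈ Finset.range (n + 1), (α k + β k)
      = α 0 + ∑ k ∈ Finset.range n, (β k + α (k + 1)) + β n := by
  rw [Finset.sum_add_distrib, Finset.sum_range_succ', Finset.sum_range_succ β,
    Finset.sum_add_distrib]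
  abel

section Derivative

variable {d : ℕ} {S : Ed d × Ed d → ℝ}

theorem hasFDerivAt_D1_coprod_D2 {a b : Ed d} (hS : DifferentiableAt ℝ S (a, b)) :
    HasFDerivAt S ((D1 S a b).coprod (D2 S a b)) (a, b) := by
  have hS' := hS.hasFDerivAt
  have h1 : D1 S a b = (fderiv ℝ S (a, b)).comp (.inl ℝ _ _) :=
    (hS'.comp a (hasFDerivAt_prodMk_left a b)).fderiv
  have h2 : D2 S a b = (fderiv ℝ S (a, b)).comp (.inr ℝ _ _) :=
    (hS'.comp b (hasFDerivAt_prodMk_right a b)).fderiv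
  rwa [h1, h2, ContinuousLinearMap.coprod_comp_inl_inr]

def pathVar (d N k : ℕ) : (Fin (N - 1) → Ed d) →L[ℝ] Ed d :=
  if h : 0 < k ∧ k < N then ContinuousLinearMap.proj (⟨k - 1, by omega⟩ : Fin (N - 1)) else 0

theorem path_eq_pathVar_add (x y : Ed d) (N : ℕ) (z : Fin (N - 1) → Ed d) (k : ℕ) :
    path x y N z k = pathVar d N k z + path x y N 0 k := by
  unfold path pathVar
  split_ifs <;> simp_all
  omega

theorem pathVar_zero (N : ℕ) : pathVar d N 0 = 0 := dif_neg (by omega)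

theorem pathVar_self (N : ℕ) : pathVar d N N = 0 := dif_neg (by omega)

theorem hasFDerivAt_path_apply (x y : Ed d) (N : ℕ) (z : Fin (N - 1) → Ed d) (k : ℕ) :
    HasFDerivAt (fun z => path x y N z k) (pathVar d N k) z := by
  have h : (fun z => path x y N z k) = fun z => pathVar d N k z + path x y N 0 k :=
    funext fun z => path_eq_pathVar_add x y N z k
  rw [h]
  exact (pathVar d N k).hasFDerivAt.add_const _

theorem hasFDerivAt_fixedAct (hS : Differentiable ℝ S) (x y : Ed d) (N : ℕ)
    (z : Fin (N - 1) → Ed d) :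
    HasFDerivAt (fixedAct S x y N)
      (∑ k ∈ Finset.range N,
        ((D1 S (path x y N z k) (path x y N z (k + 1))).coprod
          (D2 S (path x y N z k) (path x y N z (k + 1)))).comp
          ((pathVar d N k).prod (pathVar d N (k + 1)))) z := by
  show HasFDerivAt (fun z => ∑ k ∈ Finset.range N, S (path x y N z k, path x y N z (k + 1))) _ z
  exact HasFDerivAt.fun_sum fun k _ => (hasFDerivAt_D1_coprod_D2 (hS _)).comp z
    ((hasFDerivAt_path_apply x y N z k).prodMk (hasFDerivAt_path_apply x y N z (k + 1)))

theorem fderiv_fixedAct_eq_zero (hS : Differentiable ℝ S) (x y : Ed d) (N : ℕ)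
    (z : Fin (N - 1) → Ed d)
    (hEL : ∀ k, k + 1 < N →
      D2 S (path x y N z k) (path x y N z (k + 1))
        + D1 S (path x y N z (k + 1)) (path x y N z (k + 2)) = 0) :
    fderiv ℝ (fixedAct S x y N) z = 0 := by
  rw [(hasFDerivAt_fixedAct hS x y N z).fderiv]
  ext1 v
  simp only [sum_apply, ContinuousLinearMap.comp_apply, ContinuousLinearMap.prod_apply,
    ContinuousLinearMap.coprod_apply, zero_apply]
  -- summation by parts; the variation vanishes at both endpoints
  cases N with
  | zero => simp
  | succ n =>
    rw [Finset.sum_range_succ_add_shift, pathVar_zero, pathVar_self]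
    simp only [zero_apply, map_zero, zero_add, add_zero]
    refine Finset.sum_eq_zero fun k hk => ?_
    rw [← add_apply, hEL k (by simpa using hk), zero_apply]

theorem path_interior {u : ℕ → Ed d} {x y : Ed d} {N : ℕ} (h0 : u 0 = x) (hN : u N = y)
    {k : ℕ} (hk : k ≤ N) : path x y N (fun j => u (j + 1)) k = u k := by
  unfold path
  split_ifs with hk0 hkN
  · rw [hk0, h0]
  · exact congrArg u (by simp only; omega)
  · rw [show k = N by omega, hN]

theorem IsExtremal.fderiv_fixedAct_eq_zero (hS : Differentiable ℝ S) {w : ℤ → Ed d}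
    (hw : IsExtremal S w) {x y : Ed d} {N : ℕ} (h0 : w 0 = x) (hN : w N = y) :
    fderiv ℝ (fixedAct S x y N) (fun j => w ((j : ℕ) + 1)) = 0 := by
  refine _root_.fderiv_fixedAct_eq_zero hS x y N _ fun k hk => ?_
  have hu (j : ℕ) (hj : j ≤ N) :
      path x y N (fun j => w ((j : ℕ) + 1)) j = w j := by
    simpa using path_interior (u := fun n : ℕ => w n) h0 hN hj
  rw [hu k (by omega), hu (k + 1) (by omega), hu (k + 2) (by omega)]
  simpa [add_assoc, one_add_one_eq_two] using hw (k + 1)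

end Derivative

section Concatenation

variable {d : ℕ} {S : Ed d × Ed d → ℝ}

theorem fixedAct_one (x y : Ed d) (z : Fin (1 - 1) → Ed d) :
    fixedAct S x y 1 z = S (x, y) := by
  simp [fixedAct, act, path]

theorem AN_eq_fixedAct {x y : Ed d} {N : ℕ} (hN : 1 ≤ N) {c : Fin (N - 1) → Ed d}
    (hc : ∀ z, fixedAct S x y N c ≤ fixedAct S x y N z) :
    AN S N x y = fixedAct S x y N c := by
  rcases hN.eq_or_lt with rfl | hN
  · rw [AN, if_pos le_rfl, fixedAct_one]
  · rw [AN, if_neg (by omega)]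
    exact IsLeast.csInf_eq ⟨⟨c, rfl⟩, by rintro _ ⟨z, rfl⟩; exact hc z⟩

theorem NoConjPts.exists_forall_fixedAct_le (h : NoConjPts S) (x y : Ed d) {N : ℕ}
    (hN : 1 ≤ N) : ∃ c, ∀ z, fixedAct S x y N c ≤ fixedAct S x y N z := by
  rcases hN.eq_or_lt with rfl | hN
  · exact ⟨0, fun z => by rw [fixedAct_one, fixedAct_one]⟩
  · obtain ⟨c, -, hc, -⟩ := h x y N hN
    exact ⟨c, hc⟩

theorem NoConjPts.AN_le_fixedAct (h : NoConjPts S) {x y : Ed d} {N : ℕ} (hN : 1 ≤ N)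
    (z : Fin (N - 1) → Ed d) : AN S N x y ≤ fixedAct S x y N z := by
  obtain ⟨c, hc⟩ := h.exists_forall_fixedAct_le x y hN
  exact AN_eq_fixedAct hN hc ▸ hc z

def glue {N N' : ℕ} (y : Ed d) (z₁ : Fin (N - 1) → Ed d) (z₂ : Fin (N' - 1) → Ed d) :
    Fin (N + N' - 1) → Ed d :=
  fun i => if h : (i : ℕ) < N - 1 then z₁ ⟨i, h⟩
    else if h' : (i : ℕ) = N - 1 then y
    else z₂ ⟨(i : ℕ) - N, by have := i.isLt; omega⟩

theorem glue_apply_of_eq {N N' : ℕ} (y : Ed d) (z₁ : Fin (N - 1) → Ed d)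
    (z₂ : Fin (N' - 1) → Ed d) {i : Fin (N + N' - 1)} (hi : (i : ℕ) = N - 1) :
    glue y z₁ z₂ i = y := by
  simp [glue, hi]

theorem glue_split {N N' : ℕ} (hN : 1 ≤ N) (hN' : 1 ≤ N') (c : Fin (N + N' - 1) → Ed d) :
    glue (c ⟨N - 1, by omega⟩) (fun j => c ⟨j, by omega⟩) (fun j => c ⟨N + j, by omega⟩)
      = c := by
  funext i
  unfold glue
  split_ifs with h₁ h₂
  · rfl
  · exact congrArg c (Fin.ext h₂.symm)
  · exact congrArg c (Fin.ext (by simp only; omega))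

theorem path_glue_of_le {N N' : ℕ} (hN' : 1 ≤ N') (x y z : Ed d)
    (z₁ : Fin (N - 1) → Ed d) (z₂ : Fin (N' - 1) → Ed d) {k : ℕ} (hk : k ≤ N) :
    path x z (N + N') (glue y z₁ z₂) k = path x y N z₁ k := by
  unfold path glue
  dsimp only
  split_ifs <;> first | rfl | (exfalso; omega)

theorem path_glue_of_ge {N N' : ℕ} (hN : 1 ≤ N) (hN' : 1 ≤ N') (x y z : Ed d)
    (z₁ : Fin (N - 1) → Ed d) (z₂ : Fin (N' - 1) → Ed d) {k : ℕ} (hk : N ≤ k) :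
    path x z (N + N') (glue y z₁ z₂) k = path y z N' z₂ (k - N) := by
  unfold path glue
  dsimp only
  split_ifs <;>
    first | rfl | (exfalso; omega) | exact congrArg z₂ (Fin.ext (Nat.sub_right_comm k 1 N))

theorem fixedAct_glue {N N' : ℕ} (hN : 1 ≤ N) (hN' : 1 ≤ N') (x y z : Ed d)
    (z₁ : Fin (N - 1) → Ed d) (z₂ : Fin (N' - 1) → Ed d) :
    fixedAct S x z (N + N') (glue y z₁ z₂)
      = fixedAct S x y N z₁ + fixedAct S y z N' z₂ := by
  unfold fixedAct act
  rw [Finset.sum_range_add]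
  congr 1 <;> refine Finset.sum_congr rfl fun k hk => ?_ <;> rw [Finset.mem_range] at hk
  · rw [path_glue_of_le hN' _ _ _ _ _ (by omega), path_glue_of_le hN' _ _ _ _ _ (by omega)]
  · rw [path_glue_of_ge hN hN' _ _ _ _ _ (by omega), path_glue_of_ge hN hN' _ _ _ _ _ (by omega),
      Nat.add_sub_cancel_left, Nat.add_assoc, Nat.add_sub_cancel_left]

theorem NoConjPts.AN_add_le (h : NoConjPts S) (x y z : Ed d) {N N' : ℕ} (hN : 1 ≤ N)
    (hN' : 1 ≤ N') : AN S (N + N') x z ≤ AN S N x y + AN S N' y z := by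
  obtain ⟨c₁, hc₁⟩ := h.exists_forall_fixedAct_le x y hN
  obtain ⟨c₂, hc₂⟩ := h.exists_forall_fixedAct_le y z hN'
  rw [AN_eq_fixedAct hN hc₁, AN_eq_fixedAct hN' hc₂, ← fixedAct_glue hN hN']
  exact h.AN_le_fixedAct (by omega) _

theorem NoConjPts.AN_add_eq_iff (h : NoConjPts S) {x z : Ed d} (y : Ed d) {N N' : ℕ}
    (hN : 1 ≤ N) (hN' : 1 ≤ N') {c : Fin (N + N' - 1) → Ed d}
    (hc : ∀ v, fixedAct S x z (N + N') c ≤ fixedAct S x z (N + N') v)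
    (hc_uniq : ∀ c', fderiv ℝ (fixedAct S x z (N + N')) c' = 0 → c' = c) :
    AN S (N + N') x z = AN S N x y + AN S N' y z ↔ y = c ⟨N - 1, by omega⟩ := by
  constructor
  · intro heq
    obtain ⟨c₁, hc₁⟩ := h.exists_forall_fixedAct_le x y hN
    obtain ⟨c₂, hc₂⟩ := h.exists_forall_fixedAct_le y z hN'
    have hmin : IsLocalMin (fixedAct S x z (N + N')) (glue y c₁ c₂) :=
      .of_forall fun v => by
        rw [fixedAct_glue hN hN', ← AN_eq_fixedAct hN hc₁, ← AN_eq_fixedAct hN' hc₂,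
          ← heq, AN_eq_fixedAct (by omega) hc]
        exact hc v
    rw [← hc_uniq _ hmin.fderiv_eq_zero, glue_apply_of_eq _ _ _ rfl]
  · rintro rfl
    refine le_antisymm (h.AN_add_le x _ z hN hN') ?_
    rw [AN_eq_fixedAct (by omega) hc, ← glue_split hN hN' c, fixedAct_glue hN hN',
      glue_split hN hN']
    exact add_le_add (h.AN_le_fixedAct hN _) (h.AN_le_fixedAct hN' _)

end Concatenation

theorem stmt_8_general (d : ℕ) (S : Ed d × Ed d → ℝ) (hS : IsGenFn S)
    (h : NoConjPts S) (x y z : Ed d) (N N' : ℕ) (hN : 1 ≤ N) (hN' : 1 ≤ N') :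
    AN S (N + N') x z ≤ AN S N x y + AN S N' y z ∧
    ∀ w : ℤ → Ed d, IsExtremal S w → w 0 = x → w ((N : ℤ) + N') = z →
      (AN S (N + N') x z = AN S N x y + AN S N' y z ↔ y = w (N : ℤ)) := by
  obtain ⟨c, -, hc, hc_uniq⟩ := h x z (N + N') (by omega)
  refine ⟨h.AN_add_le x y z hN hN', fun w hw hw₀ hw₁ => ?_⟩
  have hwc : (fun j : Fin (N + N' - 1) => w ((j : ℕ) + 1)) = c :=
    hc_uniq _ (hw.fderiv_fixedAct_eq_zero (hS.1.differentiable (by norm_num)) hw₀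
      (by rwa [Nat.cast_add]))
  rw [h.AN_add_eq_iff y hN hN' hc hc_uniq, ← hwc]
  simp only [Nat.cast_sub hN, Nat.cast_one, sub_add_cancel]

/-- Triangular inequality `A_{N+N'}(x,z) ≤ A_N(x,y) + A_{N'}(y,z)`, with equality if and
only if `y = w_N`, where `(w_n)` is the (unique) extremal sequence with `w_0 = x` and
`w_{N+N'} = z`. -/
theorem stmt_8 (d : ℕ) (hd : 1 ≤ d) (S : Ed d × Ed d → ℝ) (hS : IsGenFn S)
    (h : NoConjPts S) (x y z : Ed d) (N N' : ℕ) (hN : 1 ≤ N) (hN' : 1 ≤ N') :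
    AN S (N + N') x z ≤ AN S N x y + AN S N' y z ∧
    ∀ w : ℤ → Ed d, IsExtremal S w → w 0 = x → w ((N : ℤ) + N') = z →
      (AN S (N + N') x z = AN S N x y + AN S N' y z ↔ y = w (N : ℤ)) :=
  stmt_8_general d S hS h x y z N N' hN hN'
end
end
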